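/- arXiv:2004.10466 — 5 statements merged into one kernel-verified Lean document; each statement's English description precedes it below -/
import Mathlib

section
/- Let d ≥ 2, let y_1,…,y_n ∈ ℝ^d satisfy condition (B1), and let 1 ≤ k ≤ d. Then: (i) every k-dimensional face of every cone of the Weyl tessellation W^B(y_1,…,y_n) (i.e., every cone obtained from some D^B_{ε,σ} by replacing some of its defining inequalities by equalities whose linear span has dimension k) equals F^B_{ε',σ'}(l_1,…,l_{n−d+k}) for some ε' ∈ {−1,+1}^n, σ' ∈ S_n and 1 ≤ l_1 < ⋯ < l_{n−d+k} ≤ n; (ii) conversely, for every ε ∈ {−1,+1}^n, σ ∈ S_n and 1 ≤ l_1 < ⋯ < l_{n−d+k} ≤ n, if F^B_{ε,σ}(l_1,…,l_{n−d+k}) ≠ {0}, then the linear span of F^B_{ε,σ}(l_1,…,l_{n−d+k}) has dimension exactly k, so it is a k-face of the Weyl tessellation. -/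
open scoped RealInnerProductSpace BigOperators Pointwise

noncomputable section

/-- The unsigned Stirling numbers of the first kind `⎡n,k⎤`, defined as the coefficients of
the polynomial identity `t (t+1) ⋯ (t+n-1) = ∑ k, ⎡n,k⎤ t^k`. -/
def stirlingFirst (n k : ℕ) : ℕ :=
  (∏ i ∈ Finset.range n, (Polynomial.X + Polynomial.C i : Polynomial ℕ)).coeff k

/-- The B-analogues `B[n,k]` of the Stirling numbers of the first kind, defined as the
coefficients of `(t+1)(t+3)⋯(t+2n-1) = ∑ k, B[n,k] t^k`. -/
def stirlingFirstB (n k : ℕ) : ℕ :=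
  (∏ i ∈ Finset.range n, (Polynomial.X + Polynomial.C (2 * i + 1) : Polynomial ℕ)).coeff k

/-- `D^A(n,d) = 2(⎡n, n-d+1⎤ + ⎡n, n-d+3⎤ + ⋯)`. -/
def DA (n d : ℕ) : ℕ := 2 * ∑ j ∈ Finset.range d, stirlingFirst n (n - d + 1 + 2 * j)

/-- `D^B(n,d) = 2(B[n, n-d+1] + B[n, n-d+3] + ⋯)`. -/
def DB (n d : ℕ) : ℕ := 2 * ∑ j ∈ Finset.range d, stirlingFirstB n (n - d + 1 + 2 * j)

/-- Stirling numbers of the second kind: the number of partitions of `{1,…,n}` into `k`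
non-empty subsets. -/
def stirlingSecond (n k : ℕ) : ℕ :=
  Set.ncard {P : Finset (Finset (Fin n)) |
    P.card = k ∧ (∀ s ∈ P, s.Nonempty) ∧ ∀ i : Fin n, ∃! s, s ∈ P ∧ i ∈ s}

/-- B-analogues of the Stirling numbers of the second kind:
`S_B(n,k) = ∑_{r=k}^n C(n,r) S(r,k) 2^{r-k}`. -/
def stirlingSecondB (n k : ℕ) : ℕ :=
  ∑ r ∈ Finset.Icc k n, Nat.choose n r * stirlingSecond r k * 2 ^ (r - k)

/-- The `i`-th of the `n-1` difference vectors `y_{σ(i)} - y_{σ(i+1)}` (0-indexed). -/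
def diffA (d n : ℕ) (y : Fin n → EuclideanSpace ℝ (Fin d)) (σ : Equiv.Perm (Fin n))
    (i : Fin (n - 1)) : EuclideanSpace ℝ (Fin d) :=
  y (σ ⟨i.val, by have := i.isLt; omega⟩) - y (σ ⟨i.val + 1, by have := i.isLt; omega⟩)

/-- Condition (A1): `n ≥ d+1` and for every permutation `σ`, any `d` of the vectors
`y_{σ(1)}-y_{σ(2)}, …, y_{σ(n-1)}-y_{σ(n)}` are linearly independent. -/
def CondA1 (d n : ℕ) (y : Fin n → EuclideanSpace ℝ (Fin d)) : Prop :=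
  d + 1 ≤ n ∧
    ∀ σ : Equiv.Perm (Fin n), ∀ s : Finset (Fin (n - 1)), s.card = d →
      LinearIndependent ℝ (fun i : s => diffA d n y σ i.1)

/-- A vector of signs `ε ∈ {±1}^n`. -/
def IsSignVec {n : ℕ} (ε : Fin n → ℝ) : Prop := ∀ i, ε i = 1 ∨ ε i = -1

/-- The `i`-th of the `n` vectors `ε_1 y_{σ(1)} - ε_2 y_{σ(2)}, …,
`ε_{n-1} y_{σ(n-1)} - ε_n y_{σ(n)}, ε_n y_{σ(n)}` (0-indexed). -/
def diffB (d n : ℕ) (y : Fin n → EuclideanSpace ℝ (Fin d)) (ε : Fin n → ℝ)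
    (σ : Equiv.Perm (Fin n)) (i : Fin n) : EuclideanSpace ℝ (Fin d) :=
  if h : i.val + 1 < n then
    ε i • y (σ i) - ε ⟨i.val + 1, h⟩ • y (σ ⟨i.val + 1, h⟩)
  else ε i • y (σ i)

/-- Condition (B1): `n ≥ d` and for every sign vector `ε` and permutation `σ`, any `d` of the
vectors `ε_1 y_{σ(1)}-ε_2 y_{σ(2)}, …, ε_{n-1}y_{σ(n-1)}-ε_n y_{σ(n)}, ε_n y_{σ(n)}` are
linearly independent. -/
def CondB1 (d n : ℕ) (y : Fin n → EuclideanSpace ℝ (Fin d)) : Prop :=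
  d ≤ n ∧
    ∀ ε : Fin n → ℝ, IsSignVec ε → ∀ σ : Equiv.Perm (Fin n),
      ∀ s : Finset (Fin n), s.card = d →
        LinearIndependent ℝ (fun i : s => diffB d n y ε σ i.1)

/-- The cone `D^A_σ = {v : ⟨v,y_{σ(1)}⟩ ≤ ⋯ ≤ ⟨v,y_{σ(n)}⟩}`. -/
def ConeA (d n : ℕ) (y : Fin n → EuclideanSpace ℝ (Fin d)) (σ : Equiv.Perm (Fin n)) :
    Set (EuclideanSpace ℝ (Fin d)) :=
  {v | Monotone fun i : Fin n => (⟪v, y (σ i)⟫)}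

/-- The Weyl tessellation of type `A_{n-1}`: all cones `D^A_σ` different from `{0}`. -/
def WeylA (d n : ℕ) (y : Fin n → EuclideanSpace ℝ (Fin d)) :
    Set (Set (EuclideanSpace ℝ (Fin d))) :=
  {C | (∃ σ, C = ConeA d n y σ) ∧ C ≠ {0}}

/-- The cone `D^B_{ε,σ} = {v : ε_1⟨v,y_{σ(1)}⟩ ≤ ⋯ ≤ ε_n⟨v,y_{σ(n)}⟩ ≤ 0}`. -/
def ConeB (d n : ℕ) (y : Fin n → EuclideanSpace ℝ (Fin d)) (ε : Fin n → ℝ)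
    (σ : Equiv.Perm (Fin n)) : Set (EuclideanSpace ℝ (Fin d)) :=
  {v | (Monotone fun i : Fin n => ε i * ⟪v, y (σ i)⟫) ∧
    ∀ i : Fin n, ε i * ⟪v, y (σ i)⟫ ≤ 0}

/-- The Weyl tessellation of type `B_n`: all cones `D^B_{ε,σ}` different from `{0}`. -/
def WeylB (d n : ℕ) (y : Fin n → EuclideanSpace ℝ (Fin d)) :
    Set (Set (EuclideanSpace ℝ (Fin d))) :=
  {C | (∃ ε σ, IsSignVec ε ∧ C = ConeB d n y ε σ) ∧ C ≠ {0}}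

/-- The cone `F^A_σ(l_1,…,l_m)` (with the `l_j` being 1-indexed): within the chain
`⟨v,y_{σ(1)}⟩ ≤ ⋯ ≤ ⟨v,y_{σ(n)}⟩` the inequality at a 1-indexed position `i ∉ {l_1,…,l_m}`
is replaced by an equality. -/
def FaceA (d n : ℕ) (y : Fin n → EuclideanSpace ℝ (Fin d)) (σ : Equiv.Perm (Fin n))
    (m : ℕ) (l : Fin m → ℕ) : Set (EuclideanSpace ℝ (Fin d)) :=
  {v | (Monotone fun i : Fin n => (⟪v, y (σ i)⟫)) ∧
    ∀ (p : ℕ) (hp : p + 1 < n), (∀ j, l j ≠ p + 1) →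
      ⟪v, y (σ ⟨p, by omega⟩)⟫ = ⟪v, y (σ ⟨p + 1, hp⟩)⟫}

/-- Admissible break positions for type `A`: `1 ≤ l_1 < ⋯ < l_m ≤ n-1`. -/
def ValidA (n m : ℕ) (l : Fin m → ℕ) : Prop :=
  StrictMono l ∧ ∀ j, 1 ≤ l j ∧ l j ≤ n - 1

/-- The set `𝓕^A_k(y_1,…,y_n)` of `k`-faces of the Weyl tessellation of type `A_{n-1}`:
all nonzero cones of the form `F^A_σ(l_1,…,l_{n-d+k-1})`. -/
def FacesA (d n k : ℕ) (y : Fin n → EuclideanSpace ℝ (Fin d)) :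
    Set (Set (EuclideanSpace ℝ (Fin d))) :=
  {F | (∃ (σ : Equiv.Perm (Fin n)) (l : Fin (n - d + k - 1) → ℕ),
      ValidA n (n - d + k - 1) l ∧ F = FaceA d n y σ (n - d + k - 1) l) ∧ F ≠ {0}}

/-- The cone `F^B_{ε,σ}(l_1,…,l_m)` (with the `l_j` being 1-indexed): within the chain
`ε_1⟨v,y_{σ(1)}⟩ ≤ ⋯ ≤ ε_n⟨v,y_{σ(n)}⟩ ≤ 0` the inequality at a 1-indexed position
`i ∉ {l_1,…,l_m}` is replaced by an equality; in particular all `⟨v,y_{σ(i)}⟩` with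
`i > l_m` vanish. -/
def FaceB (d n : ℕ) (y : Fin n → EuclideanSpace ℝ (Fin d)) (ε : Fin n → ℝ)
    (σ : Equiv.Perm (Fin n)) (m : ℕ) (l : Fin m → ℕ) : Set (EuclideanSpace ℝ (Fin d)) :=
  {v | (Monotone fun i : Fin n => ε i * ⟪v, y (σ i)⟫) ∧
    (∀ i : Fin n, ε i * ⟪v, y (σ i)⟫ ≤ 0) ∧
    (∀ (p : ℕ) (hp : p + 1 < n), (∀ j, l j ≠ p + 1) →
      ε ⟨p, by omega⟩ * ⟪v, y (σ ⟨p, by omega⟩)⟫ =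
        ε ⟨p + 1, hp⟩ * ⟪v, y (σ ⟨p + 1, hp⟩)⟫) ∧
    (∀ (p : ℕ) (hp : p < n), (∀ j, l j ≤ p) → ⟪v, y (σ ⟨p, hp⟩)⟫ = 0)}

/-- Admissible break positions for type `B`: `1 ≤ l_1 < ⋯ < l_m ≤ n`. -/
def ValidB (n m : ℕ) (l : Fin m → ℕ) : Prop :=
  StrictMono l ∧ ∀ j, 1 ≤ l j ∧ l j ≤ n

/-- The set `𝓕^B_k(y_1,…,y_n)` of `k`-faces of the Weyl tessellation of type `B_n`:
all nonzero cones of the form `F^B_{ε,σ}(l_1,…,l_{n-d+k})`. -/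
def FacesB (d n k : ℕ) (y : Fin n → EuclideanSpace ℝ (Fin d)) :
    Set (Set (EuclideanSpace ℝ (Fin d))) :=
  {F | (∃ (ε : Fin n → ℝ) (σ : Equiv.Perm (Fin n)) (l : Fin (n - d + k) → ℕ),
      IsSignVec ε ∧ ValidB n (n - d + k) l ∧ F = FaceB d n y ε σ (n - d + k) l) ∧ F ≠ {0}}

/-- The multiplicity `l_1!(l_2-l_1)!⋯(l_m-l_{m-1})!(n-l_m)!`. -/
def MultA (n m : ℕ) (l : Fin m → ℕ) : ℕ :=
  (∏ j : Fin m, Nat.factorial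
      (l j - if _ : j.val = 0 then 0 else l ⟨j.val - 1, by have := j.isLt; omega⟩)) *
    (if h : 0 < m then Nat.factorial (n - l ⟨m - 1, by omega⟩) else Nat.factorial n)

/-- The multiplicity `l_1!(l_2-l_1)!⋯(l_m-l_{m-1})!(n-l_m)! 2^{n-l_m}`. -/
def MultB (n m : ℕ) (l : Fin m → ℕ) : ℕ :=
  (∏ j : Fin m, Nat.factorial
      (l j - if _ : j.val = 0 then 0 else l ⟨j.val - 1, by have := j.isLt; omega⟩)) *
    (if h : 0 < m then Nat.factorial (n - l ⟨m - 1, by omega⟩) * 2 ^ (n - l ⟨m - 1, by omega⟩)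
     else Nat.factorial n * 2 ^ n)

/-- The face `C^A_σ(l_1,…,l_m)` of a Weyl chamber of type `A_{n-1}` in `ℝ^n`. -/
def ChamberFaceA (n : ℕ) (σ : Equiv.Perm (Fin n)) (m : ℕ) (l : Fin m → ℕ) :
    Set (EuclideanSpace ℝ (Fin n)) :=
  {β | (Monotone fun i : Fin n => β (σ i)) ∧
    ∀ (p : ℕ) (hp : p + 1 < n), (∀ j, l j ≠ p + 1) → β (σ ⟨p, by omega⟩) = β (σ ⟨p + 1, hp⟩)}

/-- The face `C^B_{ε,σ}(l_1,…,l_m)` of a Weyl chamber of type `B_n` in `ℝ^n`. -/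
def ChamberFaceB (n : ℕ) (ε : Fin n → ℝ) (σ : Equiv.Perm (Fin n)) (m : ℕ) (l : Fin m → ℕ) :
    Set (EuclideanSpace ℝ (Fin n)) :=
  {β | (Monotone fun i : Fin n => ε i * β (σ i)) ∧
    (∀ i : Fin n, ε i * β (σ i) ≤ 0) ∧
    (∀ (p : ℕ) (hp : p + 1 < n), (∀ j, l j ≠ p + 1) →
      ε ⟨p, by omega⟩ * β (σ ⟨p, by omega⟩) = ε ⟨p + 1, hp⟩ * β (σ ⟨p + 1, hp⟩)) ∧
    (∀ (p : ℕ) (hp : p < n), (∀ j, l j ≤ p) → β (σ ⟨p, hp⟩) = 0)}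

/-- The linear subspace `L = {β ∈ ℝ^n : β_1 y_1 + ⋯ + β_n y_n = 0}`. -/
def Lspace (d n : ℕ) (y : Fin n → EuclideanSpace ℝ (Fin d)) :
    Submodule ℝ (EuclideanSpace ℝ (Fin n)) where
  carrier := {β | ∑ i, β i • y i = 0}
  add_mem' := by
    intro a b ha hb
    simp only [Set.mem_setOf_eq] at *
    have h : ∀ i ∈ Finset.univ, (a + b) i • y i = a i • y i + b i • y i := by
      intro i _
      rw [PiLp.add_apply, add_smul]
    rw [Finset.sum_congr rfl h, Finset.sum_add_distrib, ha, hb, add_zero]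
  zero_mem' := by
    simp only [Set.mem_setOf_eq]
    refine Finset.sum_eq_zero fun i _ => ?_
    rw [PiLp.zero_apply, zero_smul]
  smul_mem' := by
    intro c a ha
    simp only [Set.mem_setOf_eq] at *
    have h : ∀ i ∈ Finset.univ, (c • a) i • y i = c • (a i • y i) := by
      intro i _
      rw [PiLp.smul_apply, smul_smul, smul_eq_mul]
    rw [Finset.sum_congr rfl h, ← Finset.smul_sum, ha, smul_zero]

/-- The hyperplane `{β ∈ ℝ^N : β_i = β_j}`. -/
def hypEq (N : ℕ) (i j : Fin N) : Submodule ℝ (EuclideanSpace ℝ (Fin N)) where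
  carrier := {β | β i = β j}
  add_mem' := by
    intro a b ha hb
    simp only [Set.mem_setOf_eq, PiLp.add_apply] at *
    rw [ha, hb]
  zero_mem' := by simp [Set.mem_setOf_eq]
  smul_mem' := by
    intro c a ha
    simp only [Set.mem_setOf_eq, PiLp.smul_apply] at *
    rw [ha]

/-- The hyperplane `{β ∈ ℝ^N : β_i = -β_j}`. -/
def hypOpp (N : ℕ) (i j : Fin N) : Submodule ℝ (EuclideanSpace ℝ (Fin N)) where
  carrier := {β | β i = -β j}
  add_mem' := by
    intro a b ha hb
    simp only [Set.mem_setOf_eq, PiLp.add_apply] at *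
    rw [ha, hb, neg_add]
  zero_mem' := by simp [Set.mem_setOf_eq]
  smul_mem' := by
    intro c a ha
    simp only [Set.mem_setOf_eq, PiLp.smul_apply] at *
    rw [ha, smul_neg]

/-- The hyperplane `{β ∈ ℝ^N : β_i = 0}`. -/
def hypZero (N : ℕ) (i : Fin N) : Submodule ℝ (EuclideanSpace ℝ (Fin N)) where
  carrier := {β | β i = 0}
  add_mem' := by
    intro a b ha hb
    simp only [Set.mem_setOf_eq, PiLp.add_apply] at *
    rw [ha, hb, add_zero]
  zero_mem' := by simp [Set.mem_setOf_eq]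
  smul_mem' := by
    intro c a ha
    simp only [Set.mem_setOf_eq, PiLp.smul_apply] at *
    rw [ha, smul_zero]

/-- The reflection arrangement `𝒜(A_{N-1})` in `ℝ^N`. -/
def ArrA (N : ℕ) : Set (Submodule ℝ (EuclideanSpace ℝ (Fin N))) :=
  {H | ∃ i j : Fin N, i < j ∧ H = hypEq N i j}

/-- The reflection arrangement `𝒜(B_N)` in `ℝ^N`. -/
def ArrB (N : ℕ) : Set (Submodule ℝ (EuclideanSpace ℝ (Fin N))) :=
  {H | (∃ i j : Fin N, i < j ∧ H = hypEq N i j) ∨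
    (∃ i j : Fin N, i < j ∧ H = hypOpp N i j) ∨ ∃ i : Fin N, H = hypZero N i}

/-- Two linear subspaces `U`, `W` of `ℝ^N` are in general position if
`dim (U ∩ W) = max {0, dim U + dim W - N}`. -/
def InGenPos (N : ℕ) (U W : Submodule ℝ (EuclideanSpace ℝ (Fin N))) : Prop :=
  Module.finrank ℝ ↥(U ⊓ W) = Module.finrank ℝ ↥U + Module.finrank ℝ ↥W - N

/-- A linear subspace `U` is in general position with respect to a hyperplane
arrangement `A` if it is in general position with respect to `⋂_{H ∈ B} H` for
every subset `B ⊆ A`. -/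
def InGenPosArr (N : ℕ) (U : Submodule ℝ (EuclideanSpace ℝ (Fin N)))
    (A : Set (Submodule ℝ (EuclideanSpace ℝ (Fin N)))) : Prop :=
  ∀ B ⊆ A, InGenPos N U (sInf B)

/-- The polyhedral cone `{v : ⟨x_1,v⟩ ≤ 0, …, ⟨x_m,v⟩ ≤ 0}`. -/
def PolyCone (d m : ℕ) (x : Fin m → EuclideanSpace ℝ (Fin d)) :
    Set (EuclideanSpace ℝ (Fin d)) :=
  {v | ∀ i, ⟪x i, v⟫ ≤ 0}

/-- The dual cone `C° = {v : ⟨x,v⟩ ≤ 0 ∀ x ∈ C}`. -/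
def DualCone (d : ℕ) (C : Set (EuclideanSpace ℝ (Fin d))) :
    Set (EuclideanSpace ℝ (Fin d)) :=
  {v | ∀ w ∈ C, ⟪w, v⟫ ≤ 0}

/-- The face of `D^B_{ε,σ}` obtained by replacing the inequalities at the (0-indexed)
positions in `E` by equalities. -/
def SubfaceB (d n : ℕ) (y : Fin n → EuclideanSpace ℝ (Fin d)) (ε : Fin n → ℝ)
    (σ : Equiv.Perm (Fin n)) (E : Set (Fin n)) : Set (EuclideanSpace ℝ (Fin d)) :=
  {v | v ∈ ConeB d n y ε σ ∧ ∀ i ∈ E,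
    if h : (i : ℕ) + 1 < n then
      ε i * ⟪v, y (σ i)⟫ = ε ⟨(i : ℕ) + 1, h⟩ * ⟪v, y (σ ⟨(i : ℕ) + 1, h⟩)⟫
    else ε i * ⟪v, y (σ i)⟫ = 0}

end
section AuxKZ

variable {d n : ℕ}

lemma kz_helper_delta {ι : Type*} (s : Finset ι) (a b : ι → ℝ) (ha : ∀ i ∈ s, a i < 0) :
    ∃ δ : ℝ, 0 < δ ∧ ∀ i ∈ s, a i + δ * b i < 0 := by
  classical
  induction s using Finset.induction_on with
  | empty => exact ⟨1, one_pos, by simp⟩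
  | @insert j s hj ih =>
      obtain ⟨δ, hδ, hδs⟩ := ih (fun i hi => ha i (Finset.mem_insert_of_mem hi))
      have haj : a j < 0 := ha j (Finset.mem_insert_self j s)
      refine ⟨min δ ((-a j) / (2 * (|b j| + 1))), ?_, ?_⟩
      · have : 0 < (-a j) / (2 * (|b j| + 1)) := by
          apply div_pos (by linarith) (by positivity)
        exact lt_min hδ this
      · intro i hi
        rcases Finset.mem_insert.mp hi with rfl | hi
        · set δ' := min δ ((-a i) / (2 * (|b i| + 1))) with hδ'
          have h1 : 0 < δ' := lt_min hδ (div_pos (by linarith) (by positivity))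
          have h2 : δ' ≤ (-a i) / (2 * (|b i| + 1)) := min_le_right _ _
          have h3 : δ' * b i ≤ δ' * |b i| :=
            mul_le_mul_of_nonneg_left (le_abs_self _) h1.le
          have h4 : δ' * |b i| ≤ ((-a i) / (2 * (|b i| + 1))) * |b i| :=
            mul_le_mul_of_nonneg_right h2 (abs_nonneg _)
          have h5 : ((-a i) / (2 * (|b i| + 1))) * |b i| ≤ (-a i) / 2 := by
            rw [div_mul_eq_mul_div, div_le_div_iff₀ (by positivity) (by norm_num)]
            nlinarith [abs_nonneg (b i)]
          linarith
        · have h3 : min δ ((-a j) / (2 * (|b j| + 1))) * b i ≤ δ * b i ∨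
              a i + min δ ((-a j) / (2 * (|b j| + 1))) * b i < 0 := by
            rcases le_or_gt 0 (b i) with hb | hb
            · exact Or.inl (mul_le_mul_of_nonneg_right (min_le_left _ _) hb)
            · right
              have h1 : 0 < min δ ((-a j) / (2 * (|b j| + 1))) :=
                lt_min hδ (div_pos (by linarith) (by positivity))
              have := ha i (Finset.mem_insert_of_mem hi)
              nlinarith
          rcases h3 with h3 | h3
          · have := hδs i hi; linarith
          · exact h3

lemma kz_indep_subset (hdn : d ≤ n) (x : Fin n → EuclideanSpace ℝ (Fin d))
    (hx : ∀ s : Finset (Fin n), s.card = d → LinearIndependent ℝ (fun i : s => x i.1))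
    (T : Finset (Fin n)) (hT : T.card ≤ d) :
    LinearIndependent ℝ (fun i : T => x i.1) := by
  obtain ⟨S, hTS, hS⟩ := Finset.exists_superset_card_eq hT (by simpa using hdn)
  have h := hx S hS
  have h2 := h.comp (fun i : T => (⟨i.1, hTS i.2⟩ : S))
    (fun i j hij => Subtype.ext (congrArg Subtype.val hij : ((⟨i.1, hTS i.2⟩:S):Fin n) = (⟨j.1, hTS j.2⟩:S)))
  exact h2

lemma kz_mem_orth_span_iff {S : Set (EuclideanSpace ℝ (Fin d))}
    {v : EuclideanSpace ℝ (Fin d)} :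
    v ∈ (Submodule.span ℝ S)ᗮ ↔ ∀ u ∈ S, ⟪u, v⟫ = 0 := by
  rw [Submodule.mem_orthogonal]
  constructor
  · intro h u hu; exact h u (Submodule.subset_span hu)
  · intro h u hu
    induction hu using Submodule.span_induction with
    | mem z hz => exact h z hz
    | zero => simp
    | add z w _ _ hz hw => rw [inner_add_left, hz, hw, add_zero]
    | smul c z _ hz => rw [real_inner_smul_left, hz, mul_zero]

lemma kz_finrank_orth (x : Fin n → EuclideanSpace ℝ (Fin d)) (E : Finset (Fin n))
    (hind : LinearIndependent ℝ (fun i : E => x i.1)) :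
    Module.finrank ℝ ↥((Submodule.span ℝ (x '' ↑E))ᗮ) = d - E.card := by
  have h1 : Module.finrank ℝ ↥(Submodule.span ℝ (x '' ↑E)) = E.card := by
    have himg : x '' ↑E = Set.range (fun i : E => x i.1) := by
      ext w
      simp only [Set.mem_image, Set.mem_range, Finset.mem_coe, Subtype.exists]
      exact ⟨fun ⟨i, hi, h⟩ => ⟨i, hi, h⟩, fun ⟨i, hi, h⟩ => ⟨i, hi, h⟩⟩
    rw [himg, finrank_span_eq_card hind]
    simp [Fintype.card_coe]
  have h2 := Submodule.finrank_add_finrank_orthogonal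
    (K := Submodule.span ℝ (x '' ↑E))
  have h3 : Module.finrank ℝ (EuclideanSpace ℝ (Fin d)) = d := by
    simp [finrank_euclideanSpace]
  omega

lemma kz_eq_zero_of_many (hdn : d ≤ n) (x : Fin n → EuclideanSpace ℝ (Fin d))
    (hx : ∀ s : Finset (Fin n), s.card = d → LinearIndependent ℝ (fun i : s => x i.1))
    (v : EuclideanSpace ℝ (Fin d)) (T : Finset (Fin n)) (hT : d ≤ T.card)
    (hv : ∀ i ∈ T, ⟪x i, v⟫ = 0) : v = 0 := by
  obtain ⟨T', hT'sub, hT'⟩ := Finset.exists_subset_card_eq hT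
  have hind := kz_indep_subset hdn x hx T' hT'.le
  have hmem : v ∈ (Submodule.span ℝ (x '' ↑T'))ᗮ :=
    kz_mem_orth_span_iff.mpr (by
      rintro u ⟨i, hi, rfl⟩
      exact hv i (hT'sub (by exact_mod_cast hi)))
  have h0 : Module.finrank ℝ ↥((Submodule.span ℝ (x '' ↑T'))ᗮ) = 0 := by
    rw [kz_finrank_orth x T' hind, hT']; omega
  have : (Submodule.span ℝ (x '' ↑T'))ᗮ = ⊥ := Submodule.finrank_eq_zero.mp h0
  simpa [this] using hmem

lemma kz_exists_inner_eq (hdn : d ≤ n) (x : Fin n → EuclideanSpace ℝ (Fin d))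
    (hx : ∀ s : Finset (Fin n), s.card = d → LinearIndependent ℝ (fun i : s => x i.1))
    (E : Finset (Fin n)) (hE : E.card ≤ d) (c : Fin n → ℝ) :
    ∃ u, ∀ i ∈ E, ⟪x i, u⟫ = c i := by
  classical
  set Φ : EuclideanSpace ℝ (Fin d) →ₗ[ℝ] (E → ℝ) :=
    LinearMap.pi (fun i : E => (innerSL ℝ (x i.1)).toLinearMap) with hΦ
  have hker : LinearMap.ker Φ = (Submodule.span ℝ (x '' ↑E))ᗮ := by
    ext v
    rw [LinearMap.mem_ker, kz_mem_orth_span_iff]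
    constructor
    · rintro h u ⟨i, hi, rfl⟩
      exact congrFun h ⟨i, by exact_mod_cast hi⟩
    · intro h
      funext i
      exact h (x i.1) ⟨i.1, i.2, rfl⟩
  have hind := kz_indep_subset hdn x hx E hE
  have hkerrank : Module.finrank ℝ ↥(LinearMap.ker Φ) = d - E.card := by
    rw [hker]; exact kz_finrank_orth x E hind
  have hrn := LinearMap.finrank_range_add_finrank_ker Φ
  have h3 : Module.finrank ℝ (EuclideanSpace ℝ (Fin d)) = d := by
    simp [finrank_euclideanSpace]
  have hcodom : Module.finrank ℝ (E → ℝ) = E.card := by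
    simp [Module.finrank_fintype_fun_eq_card, Fintype.card_coe]
  have hrange : Module.finrank ℝ ↥(LinearMap.range Φ) = E.card := by omega
  have htop : LinearMap.range Φ = ⊤ :=
    Submodule.eq_top_of_finrank_eq (by rw [hrange, hcodom])
  obtain ⟨u, hu⟩ := (LinearMap.range_eq_top.mp htop) (fun i : E => c i.1)
  exact ⟨u, fun i hi => congrFun hu ⟨i, hi⟩⟩

lemma kz_exists_generic (hdn : d ≤ n) (x : Fin n → EuclideanSpace ℝ (Fin d))
    (hx : ∀ s : Finset (Fin n), s.card = d → LinearIndependent ℝ (fun i : s => x i.1))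
    (E : Finset (Fin n)) (v : EuclideanSpace ℝ (Fin d)) (hv0 : v ≠ 0)
    (hvle : ∀ i, ⟪x i, v⟫ ≤ 0) (hvE : ∀ i ∈ E, ⟪x i, v⟫ = 0) :
    E.card < d ∧ ∃ w, (∀ i, ⟪x i, w⟫ ≤ 0) ∧ (∀ i ∈ E, ⟪x i, w⟫ = 0) ∧
      ∀ i ∉ E, ⟪x i, w⟫ < 0 := by
  classical
  set T : Finset (Fin n) := Finset.univ.filter (fun i => ⟪x i, v⟫ = 0) with hT
  have hET : E ⊆ T := fun i hi => Finset.mem_filter.mpr ⟨Finset.mem_univ _, hvE i hi⟩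
  have hTd : T.card < d := by
    by_contra h
    exact hv0 (kz_eq_zero_of_many hdn x hx v T (by omega)
      (fun i hi => (Finset.mem_filter.mp hi).2))
  obtain ⟨u, hu⟩ := kz_exists_inner_eq hdn x hx T hTd.le
    (fun i => if i ∈ E then 0 else -1)
  obtain ⟨δ, hδ, hδs⟩ := kz_helper_delta Tᶜ (fun i => ⟪x i, v⟫) (fun i => ⟪x i, u⟫)
    (fun i hi => lt_of_le_of_ne (hvle i)
      (by simpa [hT] using Finset.mem_compl.mp hi))
  refine ⟨lt_of_le_of_lt (Finset.card_le_card hET) hTd, v + δ • u, ?_, ?_, ?_⟩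
  · intro i
    by_cases hiT : i ∈ T
    · have h1 : ⟪x i, v⟫ = 0 := (Finset.mem_filter.mp hiT).2
      have h2 := hu i hiT
      rw [inner_add_right, real_inner_smul_right, h1, h2]
      split <;> [simp; nlinarith]
    · have := hδs i (Finset.mem_compl.mpr hiT)
      rw [inner_add_right, real_inner_smul_right]; linarith
  · intro i hi
    have h1 : ⟪x i, v⟫ = 0 := (Finset.mem_filter.mp (hET hi)).2
    have h2 := hu i (hET hi)
    rw [inner_add_right, real_inner_smul_right, h1, h2, if_pos hi]
    ring
  · intro i hi
    by_cases hiT : i ∈ T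
    · have h1 : ⟪x i, v⟫ = 0 := (Finset.mem_filter.mp hiT).2
      have h2 := hu i hiT
      rw [inner_add_right, real_inner_smul_right, h1, h2, if_neg hi]
      nlinarith
    · have := hδs i (Finset.mem_compl.mpr hiT)
      rw [inner_add_right, real_inner_smul_right]; linarith

lemma kz_span_F (hdn : d ≤ n) (x : Fin n → EuclideanSpace ℝ (Fin d))
    (hx : ∀ s : Finset (Fin n), s.card = d → LinearIndependent ℝ (fun i : s => x i.1))
    (E : Finset (Fin n))
    (w : EuclideanSpace ℝ (Fin d)) (hwE : ∀ i ∈ E, ⟪x i, w⟫ = 0)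
    (hws : ∀ i ∉ E, ⟪x i, w⟫ < 0) :
    Submodule.span ℝ {v | (∀ i, ⟪x i, v⟫ ≤ 0) ∧ ∀ i ∈ E, ⟪x i, v⟫ = 0}
      = (Submodule.span ℝ (x '' ↑E))ᗮ := by
  classical
  apply le_antisymm
  · rw [Submodule.span_le]
    rintro v ⟨_, hvE⟩
    refine kz_mem_orth_span_iff.mpr ?_
    rintro u ⟨i, hi, rfl⟩
    exact hvE i (by exact_mod_cast hi)
  · intro z hz
    have hzE : ∀ i ∈ E, ⟪x i, z⟫ = 0 := fun i hi =>
      kz_mem_orth_span_iff.mp hz (x i) ⟨i, by exact_mod_cast hi, rfl⟩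
    obtain ⟨δ, hδ, hδs⟩ := kz_helper_delta Eᶜ (fun i => ⟪x i, w⟫) (fun i => ⟪x i, z⟫)
      (fun i hi => hws i (Finset.mem_compl.mp hi))
    have hwmem : w ∈ {v | (∀ i, ⟪x i, v⟫ ≤ 0) ∧ ∀ i ∈ E, ⟪x i, v⟫ = 0} := by
      refine ⟨fun i => ?_, hwE⟩
      by_cases hi : i ∈ E
      · exact (hwE i hi).le
      · exact (hws i hi).le
    have hmem : w + δ • z ∈ {v | (∀ i, ⟪x i, v⟫ ≤ 0) ∧ ∀ i ∈ E, ⟪x i, v⟫ = 0} := by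
      constructor
      · intro i
        by_cases hi : i ∈ E
        · rw [inner_add_right, real_inner_smul_right, hwE i hi, hzE i hi]; simp
        · have := hδs i (Finset.mem_compl.mpr hi)
          rw [inner_add_right, real_inner_smul_right]; linarith
      · intro i hi
        rw [inner_add_right, real_inner_smul_right, hwE i hi, hzE i hi]; ring
    have h1 : w + δ • z ∈ Submodule.span ℝ
        {v | (∀ i, ⟪x i, v⟫ ≤ 0) ∧ ∀ i ∈ E, ⟪x i, v⟫ = 0} := Submodule.subset_span hmem
    have h2 : w ∈ Submodule.span ℝ
        {v | (∀ i, ⟪x i, v⟫ ≤ 0) ∧ ∀ i ∈ E, ⟪x i, v⟫ = 0} := Submodule.subset_span hwmem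
    have h3 : δ • z ∈ Submodule.span ℝ
        {v | (∀ i, ⟪x i, v⟫ ≤ 0) ∧ ∀ i ∈ E, ⟪x i, v⟫ = 0} := by
      have := Submodule.sub_mem _ h1 h2
      simpa using this
    have h4 := Submodule.smul_mem _ δ⁻¹ h3
    rwa [smul_smul, inv_mul_cancel₀ hδ.ne', one_smul] at h4


section TransKZ

variable {d n : ℕ} (y : Fin n → EuclideanSpace ℝ (Fin d)) (ε : Fin n → ℝ)
  (σ : Equiv.Perm (Fin n))

lemma kz_inner_diffB (v : EuclideanSpace ℝ (Fin d)) (i : Fin n) :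
    ⟪diffB d n y ε σ i, v⟫ = if h : i.1 + 1 < n then
      ε i * ⟪v, y (σ i)⟫ - ε ⟨i.1 + 1, h⟩ * ⟪v, y (σ ⟨i.1 + 1, h⟩)⟫
    else ε i * ⟪v, y (σ i)⟫ := by
  unfold diffB
  split
  · next h =>
      rw [inner_sub_left, real_inner_smul_left, real_inner_smul_left,
        real_inner_comm (y (σ i)) v, real_inner_comm (y (σ ⟨i.1 + 1, h⟩)) v]
  · next h =>
      rw [real_inner_smul_left, real_inner_comm (y (σ i)) v]

lemma kz_monotone_iff {f : Fin n → ℝ} :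
    Monotone f ↔ ∀ (p : ℕ) (hp : p + 1 < n), f ⟨p, by omega⟩ ≤ f ⟨p + 1, hp⟩ := by
  constructor
  · intro h p hp
    exact h (by simp [Fin.mk_le_mk])
  · intro h
    have key : ∀ (t : ℕ) (i j : Fin n), i.1 + t = j.1 → f i ≤ f j := by
      intro t
      induction t with
      | zero =>
          intro i j hij
          have : i = j := Fin.ext (by omega)
          rw [this]
      | succ t ih =>
          intro i j hij
          have hmid : i.1 + t < n := by omega
          have h1 : f i ≤ f ⟨i.1 + t, hmid⟩ := ih i ⟨i.1 + t, hmid⟩ rfl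
          have h2 : f ⟨i.1 + t, hmid⟩ ≤ f ⟨i.1 + t + 1, by omega⟩ := h (i.1 + t) (by omega)
          have : (⟨i.1 + t + 1, by omega⟩ : Fin n) = j := Fin.ext (by simp; omega)
          rw [this] at h2
          exact le_trans h1 h2
    intro i j hij
    exact key (j.1 - i.1) i j (by omega)

lemma kz_mem_coneB_iff (hn : 0 < n) (v : EuclideanSpace ℝ (Fin d)) :
    v ∈ ConeB d n y ε σ ↔ ∀ i, ⟪diffB d n y ε σ i, v⟫ ≤ 0 := by
  constructor
  · rintro ⟨hmono, hle⟩ i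
    rw [kz_inner_diffB]
    split
    · next h =>
        have := hmono (show i ≤ ⟨i.1 + 1, h⟩ by simp [Fin.le_def])
        simpa using sub_nonpos.mpr this
    · exact hle i
  · intro h
    have hmono : Monotone fun i : Fin n => ε i * ⟪v, y (σ i)⟫ := by
      rw [kz_monotone_iff]
      intro p hp
      have := h ⟨p, by omega⟩
      rw [kz_inner_diffB, dif_pos (show (⟨p, by omega⟩ : Fin n).1 + 1 < n from hp)] at this
      simpa using sub_nonpos.mp this
    refine ⟨hmono, fun i => ?_⟩
    have hlast := h ⟨n - 1, by omega⟩
    rw [kz_inner_diffB, dif_neg (by simp; omega)] at hlast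
    have := hmono (show i ≤ ⟨n - 1, by omega⟩ by simp [Fin.le_def]; omega)
    exact le_trans this hlast

lemma kz_mem_subfaceB_iff (hn : 0 < n) (E : Set (Fin n)) (v : EuclideanSpace ℝ (Fin d)) :
    v ∈ SubfaceB d n y ε σ E ↔
      (∀ i, ⟪diffB d n y ε σ i, v⟫ ≤ 0) ∧ ∀ i ∈ E, ⟪diffB d n y ε σ i, v⟫ = 0 := by
  unfold SubfaceB
  rw [Set.mem_setOf_eq, ← kz_mem_coneB_iff y ε σ hn v]
  refine and_congr Iff.rfl (forall_congr' fun i => forall_congr' fun hi => ?_)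
  rw [kz_inner_diffB]
  split
  · next h => exact ⟨fun he => by rw [he]; ring, fun he => by linarith [sub_eq_zero.mp he]⟩
  · exact Iff.rfl

lemma kz_eps_ne (hsv : IsSignVec ε) (i : Fin n) : ε i ≠ 0 := by
  rcases hsv i with h | h <;> rw [h] <;> norm_num

lemma kz_mem_faceB_iff (hsv : IsSignVec ε) (hn : 0 < n) (m : ℕ) (l : Fin m → ℕ)
    (hl : ∀ j, 1 ≤ l j ∧ l j ≤ n) (E : Finset (Fin n))
    (hcorr : ∀ i : Fin n, i ∈ E ↔ ∀ j, l j ≠ i.1 + 1) (v : EuclideanSpace ℝ (Fin d)) :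
    v ∈ FaceB d n y ε σ m l ↔
      (∀ i, ⟪diffB d n y ε σ i, v⟫ ≤ 0) ∧ ∀ i ∈ E, ⟪diffB d n y ε σ i, v⟫ = 0 := by
  constructor
  · rintro ⟨hmono, hle, heq, hzero⟩
    refine ⟨(kz_mem_coneB_iff y ε σ hn v).mp ⟨hmono, hle⟩, fun i hi => ?_⟩
    have hli := (hcorr i).mp hi
    rw [kz_inner_diffB]
    split
    · next h =>
        have := heq i.1 h (by simpa using hli)
        simp only [Fin.eta] at this
        rw [this]; ring
    · next h =>
        have hz := hzero i.1 i.isLt (fun j => by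
          have h1 := (hl j).2
          have h2 := hli j
          omega)
        simp only [Fin.eta] at hz
        rw [hz]; ring
  · rintro ⟨hineq, heqE⟩
    obtain ⟨hmono, hle⟩ := (kz_mem_coneB_iff y ε σ hn v).mpr hineq
    refine ⟨hmono, hle, ?_, ?_⟩
    · intro p hp hlp
      have hiE : (⟨p, by omega⟩ : Fin n) ∈ E := (hcorr _).mpr (by simpa using hlp)
      have := heqE _ hiE
      rw [kz_inner_diffB, dif_pos (show (⟨p, by omega⟩ : Fin n).1 + 1 < n from hp)] at this
      have := sub_eq_zero.mp this
      exact this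
    · intro p hp hall
      have claim : ∀ (t q : ℕ) (hq : q < n), p ≤ q → n - 1 - q ≤ t →
          ε ⟨q, hq⟩ * ⟪v, y (σ ⟨q, hq⟩)⟫ = 0 := by
        intro t
        induction t with
        | zero =>
            intro q hq hpq ht
            have hqn : ¬ (q + 1 < n) := by omega
            have hiE : (⟨q, hq⟩ : Fin n) ∈ E := (hcorr _).mpr (fun j => by
              have := hall j; simp; omega)
            have := heqE _ hiE
            rwa [kz_inner_diffB, dif_neg (by simpa using hqn)] at this
        | succ t ih =>
            intro q hq hpq ht
            by_cases h : q + 1 < n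
            · have hiE : (⟨q, hq⟩ : Fin n) ∈ E := (hcorr _).mpr (fun j => by
                have := hall j; simp; omega)
              have he := heqE _ hiE
              rw [kz_inner_diffB, dif_pos (show (⟨q, hq⟩ : Fin n).1 + 1 < n from h)] at he
              have h2 := ih (q + 1) h (by omega) (by omega)
              have h3 : ε ⟨q, hq⟩ * ⟪v, y (σ ⟨q, hq⟩)⟫
                  = ε ⟨q + 1, h⟩ * ⟪v, y (σ ⟨q + 1, h⟩)⟫ := sub_eq_zero.mp he
              rw [h3, h2]
            · have hiE : (⟨q, hq⟩ : Fin n) ∈ E := (hcorr _).mpr (fun j => by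
                have := hall j; simp; omega)
              have := heqE _ hiE
              rwa [kz_inner_diffB, dif_neg (by simpa using h)] at this
      have := claim (n - 1 - p) p hp le_rfl le_rfl
      exact (mul_eq_zero.mp this).resolve_left (kz_eps_ne ε hsv _)

end TransKZ

/-- Proposition 2.3: characterization of the `k`-faces of the Weyl tessellation of type
`B_n`. (i) Every `k`-dimensional face of a cone of the tessellation is of the form
`F^B_{ε',σ'}(l_1,…,l_{n-d+k})`; (ii) every such nonzero cone has linear span of
dimension exactly `k`. -/
theorem faces_characterization_B (d n k : ℕ) (hd : 2 ≤ d) (hk : 1 ≤ k) (hkd : k ≤ d)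
    (y : Fin n → EuclideanSpace ℝ (Fin d)) (hy : CondB1 d n y) :
    (∀ (ε : Fin n → ℝ) (σ : Equiv.Perm (Fin n)), IsSignVec ε →
      ConeB d n y ε σ ≠ {0} → ∀ E : Set (Fin n),
      Module.finrank ℝ ↥(Submodule.span ℝ (SubfaceB d n y ε σ E)) = k →
      ∃ (ε' : Fin n → ℝ) (σ' : Equiv.Perm (Fin n)) (l : Fin (n - d + k) → ℕ),
        IsSignVec ε' ∧ ValidB n (n - d + k) l ∧
        SubfaceB d n y ε σ E = FaceB d n y ε' σ' (n - d + k) l) ∧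
    (∀ (ε : Fin n → ℝ) (σ : Equiv.Perm (Fin n)) (l : Fin (n - d + k) → ℕ),
      IsSignVec ε → ValidB n (n - d + k) l →
      FaceB d n y ε σ (n - d + k) l ≠ {0} →
      Module.finrank ℝ ↥(Submodule.span ℝ (FaceB d n y ε σ (n - d + k) l)) = k) := by
  classical
  obtain ⟨hdn, hind⟩ := hy
  have hn : 0 < n := by omega
  constructor
  · -- part (i)
    intro ε σ hsv _hcone E hdim
    have hxind : ∀ s : Finset (Fin n), s.card = d →
        LinearIndependent ℝ (fun i : s => diffB d n y ε σ i.1) :=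
      fun s hs => hind ε hsv σ s hs
    set E'' : Finset (Fin n) := Finset.univ.filter
      (fun i => ∀ v ∈ SubfaceB d n y ε σ E, ⟪diffB d n y ε σ i, v⟫ = 0) with hE''
    have hSF : SubfaceB d n y ε σ E =
        {v | (∀ i, ⟪diffB d n y ε σ i, v⟫ ≤ 0) ∧ ∀ i ∈ E'', ⟪diffB d n y ε σ i, v⟫ = 0} := by
      ext v
      constructor
      · intro hv
        obtain ⟨h1, _⟩ := (kz_mem_subfaceB_iff y ε σ hn E v).mp hv
        exact ⟨h1, fun i hi => (Finset.mem_filter.mp hi).2 v hv⟩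
      · rintro ⟨h1, h2⟩
        refine (kz_mem_subfaceB_iff y ε σ hn E v).mpr ⟨h1, fun i hi => ?_⟩
        refine h2 i ?_
        simp only [hE'', Finset.mem_filter, Finset.mem_univ, true_and]
        intro v' hv'
        exact ((kz_mem_subfaceB_iff y ε σ hn E v').mp hv').2 i hi
    have hvex : ∃ v, v ∈ SubfaceB d n y ε σ E ∧ v ≠ 0 := by
      by_contra hcon
      push_neg at hcon
      have hbot : Submodule.span ℝ (SubfaceB d n y ε σ E) = ⊥ :=
        le_bot_iff.mp (Submodule.span_le.mpr fun v hv => by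
          simp [hcon v hv, Submodule.mem_bot])
      rw [hbot] at hdim
      simp [finrank_bot] at hdim
      omega
    obtain ⟨v, hvS, hv0⟩ := hvex
    obtain ⟨hv1, hv2⟩ := hSF ▸ hvS
    obtain ⟨hcard, w, hw1, hw2, hw3⟩ :=
      kz_exists_generic hdn (diffB d n y ε σ) hxind E'' v hv0 hv1 hv2
    have hspan : Submodule.span ℝ (SubfaceB d n y ε σ E)
        = (Submodule.span ℝ (diffB d n y ε σ '' ↑E''))ᗮ := by
      rw [hSF]
      exact kz_span_F hdn (diffB d n y ε σ) hxind E'' w hw2 hw3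
    have hrank : Module.finrank ℝ
        ↥((Submodule.span ℝ (diffB d n y ε σ '' ↑E''))ᗮ) = d - E''.card :=
      kz_finrank_orth (diffB d n y ε σ) E''
        (kz_indep_subset hdn (diffB d n y ε σ) hxind E'' hcard.le)
    rw [hspan, hrank] at hdim
    have hEcard : E''.card = d - k := by omega
    have hCcard : E''ᶜ.card = n - d + k := by
      rw [Finset.card_compl, hEcard]
      simp only [Fintype.card_fin]
      omega
    set C := E''ᶜ with hC
    set l : Fin (n - d + k) → ℕ := fun j => ((C.orderIsoOfFin hCcard j : Fin n) : ℕ) + 1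
      with hldef
    have hlmono : StrictMono l := by
      intro a b hab
      have h := (C.orderIsoOfFin hCcard).strictMono hab
      have : ((C.orderIsoOfFin hCcard a : Fin n) : ℕ)
          < ((C.orderIsoOfFin hCcard b : Fin n) : ℕ) := h
      simp only [hldef]
      omega
    have hlb : ∀ j, 1 ≤ l j ∧ l j ≤ n := by
      intro j
      have := (C.orderIsoOfFin hCcard j : Fin n).isLt
      simp only [hldef]
      omega
    have hcorr : ∀ i : Fin n, i ∈ E'' ↔ ∀ j, l j ≠ i.1 + 1 := by
      intro i
      have hCmem : (∃ j, ((C.orderIsoOfFin hCcard j : Fin n)) = i) ↔ i ∈ C := by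
        constructor
        · rintro ⟨j, rfl⟩
          exact (C.orderIsoOfFin hCcard j).2
        · intro hi
          exact ⟨(C.orderIsoOfFin hCcard).symm ⟨i, hi⟩, by simp⟩
      constructor
      · intro hi j hj
        have : ((C.orderIsoOfFin hCcard j : Fin n)) = i := by
          apply Fin.ext
          simp only [hldef] at hj
          omega
        exact (Finset.mem_compl.mp (hCmem.mp ⟨j, this⟩)) hi
      · intro hall
        by_contra hi
        obtain ⟨j, hj⟩ := hCmem.mpr (Finset.mem_compl.mpr hi)
        exact hall j (by simp only [hldef, hj])
    refine ⟨ε, σ, l, hsv, ⟨hlmono, hlb⟩, ?_⟩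
    rw [hSF]
    exact (Set.ext fun v =>
      kz_mem_faceB_iff y ε σ hsv hn (n - d + k) l hlb E'' hcorr v).symm
  · -- part (ii)
    intro ε σ l hsv hl hne
    obtain ⟨hlmono, hlb⟩ := hl
    have hxind : ∀ s : Finset (Fin n), s.card = d →
        LinearIndependent ℝ (fun i : s => diffB d n y ε σ i.1) :=
      fun s hs => hind ε hsv σ s hs
    set E : Finset (Fin n) := Finset.univ.filter (fun i => ∀ j, l j ≠ i.1 + 1) with hE
    have hcorr : ∀ i : Fin n, i ∈ E ↔ ∀ j, l j ≠ i.1 + 1 := by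
      intro i; simp [hE]
    have hFS : FaceB d n y ε σ (n - d + k) l =
        {v | (∀ i, ⟪diffB d n y ε σ i, v⟫ ≤ 0) ∧ ∀ i ∈ E, ⟪diffB d n y ε σ i, v⟫ = 0} :=
      Set.ext fun v => kz_mem_faceB_iff y ε σ hsv hn (n - d + k) l hlb E hcorr v
    have hinj : Function.Injective
        (fun j : Fin (n - d + k) => (⟨l j - 1, by have := (hlb j).2; omega⟩ : Fin n)) := by
      intro a b hab
      have h1 := (hlb a).1
      have h2 := (hlb b).1
      have : l a - 1 = l b - 1 := congrArg Fin.val hab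
      exact hlmono.injective (by omega)
    have hcompl : Eᶜ = Finset.univ.image
        (fun j : Fin (n - d + k) => (⟨l j - 1, by have := (hlb j).2; omega⟩ : Fin n)) := by
      ext i
      simp only [Finset.mem_compl, hE, Finset.mem_filter, Finset.mem_univ, true_and,
        Finset.mem_image]
      constructor
      · intro h
        push_neg at h
        obtain ⟨j, hj⟩ := h
        refine ⟨j, Fin.ext ?_⟩
        show l j - 1 = (i : ℕ)
        omega
      · rintro ⟨j, rfl⟩
        push_neg
        exact ⟨j, by have := (hlb j).1; simp; omega⟩
    have hEcard : E.card = d - k := by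
      have h1 : Eᶜ.card = n - d + k := by
        rw [hcompl, Finset.card_image_of_injective _ hinj, Finset.card_univ,
          Fintype.card_fin]
      have h2 := Finset.card_compl E (α := Fin n)
      have h3 := Finset.card_le_univ E
      simp only [Fintype.card_fin] at h2 h3
      omega
    have hvex : ∃ v, v ∈ FaceB d n y ε σ (n - d + k) l ∧ v ≠ 0 := by
      by_contra hcon
      push_neg at hcon
      apply hne
      apply Set.eq_singleton_iff_unique_mem.mpr
      constructor
      · rw [hFS]
        exact ⟨fun i => by simp, fun i _ => by simp⟩
      · exact fun v hv => hcon v hv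
    obtain ⟨v, hvS, hv0⟩ := hvex
    obtain ⟨hv1, hv2⟩ := hFS ▸ hvS
    obtain ⟨hcard, w, hw1, hw2, hw3⟩ :=
      kz_exists_generic hdn (diffB d n y ε σ) hxind E v hv0 hv1 hv2
    have hspan : Submodule.span ℝ (FaceB d n y ε σ (n - d + k) l)
        = (Submodule.span ℝ (diffB d n y ε σ '' ↑E))ᗮ := by
      rw [hFS]
      exact kz_span_F hdn (diffB d n y ε σ) hxind E w hw2 hw3
    have hrank : Module.finrank ℝ
        ↥((Submodule.span ℝ (diffB d n y ε σ '' ↑E))ᗮ) = d - E.card :=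
      kz_finrank_orth (diffB d n y ε σ) E
        (kz_indep_subset hdn (diffB d n y ε σ) hxind E hcard.le)
    rw [hspan, hrank, hEcard]
    omega
end AuxKZ
end

section
/- Let d ≥ 2, n ≥ d+1, and y_1,…,y_n ∈ ℝ^d. Set L := {β ∈ ℝ^n : β_1 y_1 + ⋯ + β_n y_n = 0}. Then the following are equivalent: (A1) for every permutation σ of {1,…,n}, any d of the vectors y_{σ(1)}−y_{σ(2)}, y_{σ(2)}−y_{σ(3)}, …, y_{σ(n−1)}−y_{σ(n)} are linearly independent; (A2) the orthogonal complement L^⊥ has dimension d and is in general position with respect to the reflection arrangement 𝒜(A_{n−1}). -/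
open scoped RealInnerProductSpace BigOperators Pointwise

/-!
Write `L = ker Φ` with `Φ β = ∑ i, β i • y i`, so that `Lᗮ = range Φ†`. Every intersection of
hyperplanes `β a = β b` of `𝒜(A_{n-1})` is `Wᗮ`, where `W` is spanned by the differences
`e a - e b` of the chosen pairs, and `range Φ† ⊓ Wᗮ = Φ† ((Φ W)ᗮ)`. So once `Φ` is onto, general
position of `Lᗮ` with respect to `Wᗮ` says exactly `dim Φ W = min d (dim W)`, where `Φ W` is
spanned by the corresponding differences `y a - y b`. Ordering `{1, …, n}` so that the classes of
the generated equivalence relation become intervals, both `W` and `Φ W` are spanned by consecutive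
differences along a permutation, the `e`-differences being independent; in this form the rank
condition for all relations is (A1).
-/

open Module Submodule

section GeneralPosition

variable {V E : Type*} [NormedAddCommGroup V] [InnerProductSpace ℝ V] [FiniteDimensional ℝ V]
  [NormedAddCommGroup E] [InnerProductSpace ℝ E] [FiniteDimensional ℝ E]

theorem LinearMap.range_adjoint_inf_orthogonal (A : V →ₗ[ℝ] E) (W : Submodule ℝ V) :
    LinearMap.range A.adjoint ⊓ Wᗮ = (W.map A)ᗮ.map A.adjoint := by
  rw [← Submodule.map_comap_eq]
  congr 1
  ext v
  simp only [mem_comap, mem_orthogonal, mem_map, forall_exists_index, and_imp,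
    forall_apply_eq_imp_iff₂, LinearMap.adjoint_inner_right]

theorem LinearMap.finrank_range_adjoint_inf_orthogonal_add {A : V →ₗ[ℝ] E}
    (hA : LinearMap.range A = ⊤) (W : Submodule ℝ V) :
    finrank ℝ ↥(LinearMap.range A.adjoint ⊓ Wᗮ) + finrank ℝ ↥(W.map A) = finrank ℝ E := by
  have hinj : Function.Injective A.adjoint := by
    rw [← LinearMap.ker_eq_bot, ← LinearMap.orthogonal_range, hA, top_orthogonal_eq_bot]
  rw [A.range_adjoint_inf_orthogonal, ← (equivMapOfInjective _ hinj _).finrank_eq, add_comm,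
    finrank_add_finrank_orthogonal]

end GeneralPosition

theorem inGenPos_range_adjoint_orthogonal_iff {N : ℕ} {E : Type*} [NormedAddCommGroup E]
    [InnerProductSpace ℝ E] [FiniteDimensional ℝ E] {A : EuclideanSpace ℝ (Fin N) →ₗ[ℝ] E}
    (hA : LinearMap.range A = ⊤) (W : Submodule ℝ (EuclideanSpace ℝ (Fin N))) :
    InGenPos N (LinearMap.range A.adjoint) Wᗮ ↔
      finrank ℝ ↥(W.map A) = min (finrank ℝ E) (finrank ℝ W) := by
  have h₁ := A.finrank_range_adjoint_inf_orthogonal_add hA W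
  have h₂ := W.finrank_add_finrank_orthogonal
  have h₃ := W.finrank_map_le A
  have h₄ := (W.map A).finrank_le
  rw [finrank_euclideanSpace_fin] at h₂
  rw [InGenPos, LinearMap.finrank_range_adjoint, hA, finrank_top]
  omega

section SpanDiff

variable (R : Type*) {ι M N : Type*} [Ring R] [AddCommGroup M] [Module R M] [AddCommGroup N]
  [Module R N]

def spanDiff (r : ι → ι → Prop) (z : ι → M) : Submodule R M :=
  span R {x | ∃ a b, r a b ∧ z a - z b = x}

variable {R}

theorem spanDiff_mono {r r' : ι → ι → Prop} (h : ∀ a b, r a b → r' a b) (z : ι → M) :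
    spanDiff R r z ≤ spanDiff R r' z :=
  span_mono fun _ ⟨a, b, hab, hx⟩ => ⟨a, b, h a b hab, hx⟩

theorem sub_mem_spanDiff {r : ι → ι → Prop} {a b : ι} (h : r a b) (z : ι → M) :
    z a - z b ∈ spanDiff R r z :=
  subset_span ⟨a, b, h, rfl⟩

theorem spanDiff_eqvGen (r : ι → ι → Prop) (z : ι → M) :
    spanDiff R (Relation.EqvGen r) z = spanDiff R r z := by
  refine le_antisymm (span_le.2 ?_) (spanDiff_mono (fun _ _ => .rel _ _) z)
  rintro _ ⟨a, b, hab, rfl⟩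
  induction hab with
  | rel a b h => exact sub_mem_spanDiff h z
  | refl a => simp
  | symm a b _ ih => simpa using neg_mem ih
  | trans a b c _ _ ih₁ ih₂ => simpa using add_mem ih₁ ih₂

theorem map_spanDiff (f : M →ₗ[R] N) (r : ι → ι → Prop) (z : ι → M) :
    (spanDiff R r z).map f = spanDiff R r (f ∘ z) := by
  rw [spanDiff, map_span]
  congr 1
  ext x
  simp

end SpanDiff

theorem mem_orthogonal_spanDiff_basisFun {ι : Type*} [Fintype ι] {r : ι → ι → Prop}
    {β : EuclideanSpace ℝ ι} :
    β ∈ (spanDiff ℝ r (EuclideanSpace.basisFun ι ℝ))ᗮ ↔ ∀ a b, r a b → β a = β b := by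
  rw [spanDiff, ← span_singleton_le_iff_mem, ← isOrtho_iff_le, isOrtho_span]
  simp only [Set.mem_singleton_iff, forall_eq, Set.mem_ofPred_eq, forall_exists_index, and_imp]
  constructor
  · intro h a b hab
    simpa [inner_sub_right, sub_eq_zero] using h a b hab rfl
  · rintro h _ a b hab rfl
    simp [inner_sub_right, h a b hab]

section ReflectionArrangement

variable {n : ℕ}

theorem sInf_eq_orthogonal_spanDiff {B : Set (Submodule ℝ (EuclideanSpace ℝ (Fin n)))}
    (hB : B ⊆ ArrA n) :
    sInf B = (spanDiff ℝ (fun a b => hypEq n a b ∈ B) (EuclideanSpace.basisFun (Fin n) ℝ))ᗮ := by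
  ext β
  rw [mem_sInf, mem_orthogonal_spanDiff_basisFun]
  refine ⟨fun h a b hab => h _ hab, fun h H hH => ?_⟩
  obtain ⟨i, j, -, rfl⟩ := hB hH
  exact h i j hH

theorem exists_subset_arrA_sInf_eq (r : Fin n → Fin n → Prop) :
    ∃ B ⊆ ArrA n, sInf B = (spanDiff ℝ r (EuclideanSpace.basisFun (Fin n) ℝ))ᗮ := by
  refine ⟨{H | ∃ i j, i < j ∧ (r i j ∨ r j i) ∧ H = hypEq n i j},
    fun H ⟨i, j, hij, _, hH⟩ => ⟨i, j, hij, hH⟩, ?_⟩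
  ext β
  rw [mem_sInf, mem_orthogonal_spanDiff_basisFun]
  constructor
  · intro h a b hab
    rcases lt_trichotomy a b with hlt | rfl | hgt
    · exact h _ ⟨a, b, hlt, .inl hab, rfl⟩
    · rfl
    · exact (h _ ⟨b, a, hgt, .inr hab, rfl⟩).symm
  · rintro h _ ⟨i, j, -, hr | hr, rfl⟩
    · exact h i j hr
    · exact (h j i hr).symm

theorem inGenPosArr_arrA_iff {U : Submodule ℝ (EuclideanSpace ℝ (Fin n))} :
    InGenPosArr n U (ArrA n) ↔ ∀ r : Fin n → Fin n → Prop,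
      InGenPos n U (spanDiff ℝ r (EuclideanSpace.basisFun (Fin n) ℝ))ᗮ := by
  refine ⟨fun h r => ?_, fun h B hB => ?_⟩
  · obtain ⟨B, hB, hBr⟩ := exists_subset_arrA_sInf_eq r
    exact hBr ▸ h B hB
  · rw [sInf_eq_orthogonal_spanDiff hB]
    exact h _

end ReflectionArrangement

section ConsecutiveDifferences

variable {n : ℕ}

def ConsecutiveAlong (σ : Equiv.Perm (Fin n)) (s : Finset (Fin (n - 1))) (a b : Fin n) : Prop :=
  ∃ i ∈ s, σ ⟨i, by have := i.isLt; omega⟩ = a ∧ σ ⟨i + 1, by have := i.isLt; omega⟩ = b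

theorem spanDiff_consecutiveAlong {d : ℕ} (σ : Equiv.Perm (Fin n)) (s : Finset (Fin (n - 1)))
    (z : Fin n → EuclideanSpace ℝ (Fin d)) :
    spanDiff ℝ (ConsecutiveAlong σ s) z = span ℝ (Set.range fun i : s => diffA d n z σ i) := by
  rw [spanDiff]
  congr 1
  ext x
  constructor
  · rintro ⟨_, _, ⟨i, hi, rfl, rfl⟩, rfl⟩
    exact ⟨⟨i, hi⟩, rfl⟩
  · rintro ⟨⟨i, hi⟩, rfl⟩
    exact ⟨_, _, ⟨i, hi, rfl, rfl⟩, rfl⟩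

def prefixSums (σ : Equiv.Perm (Fin n)) : EuclideanSpace ℝ (Fin n) →ₗ[ℝ] (Fin (n - 1) → ℝ) where
  toFun β j := ∑ p with p.val ≤ j.val, β (σ p)
  map_add' _ _ := by ext; simp [Finset.sum_add_distrib]
  map_smul' _ _ := by ext; simp [Finset.mul_sum]

theorem prefixSums_diffA_basisFun (σ : Equiv.Perm (Fin n)) (i : Fin (n - 1)) :
    prefixSums σ (diffA n n (EuclideanSpace.basisFun (Fin n) ℝ) σ i) = Pi.single i 1 := by
  ext j
  have key (a : Fin n) : ∑ p with p.val ≤ j.val, EuclideanSpace.basisFun (Fin n) ℝ (σ a) (σ p) =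
      if a.val ≤ j.val then 1 else 0 := by
    simp only [EuclideanSpace.basisFun_apply, PiLp.single_apply, σ.injective.eq_iff]
    rw [Finset.sum_ite_eq']
    simp
  simp only [prefixSums, diffA, LinearMap.coe_mk, AddHom.coe_mk, PiLp.sub_apply,
    Finset.sum_sub_distrib, key, Pi.single_apply, Fin.ext_iff]
  split_ifs <;> first | (exfalso; omega) | norm_num

theorem linearIndependent_diffA_basisFun (σ : Equiv.Perm (Fin n)) :
    LinearIndependent ℝ (diffA n n (EuclideanSpace.basisFun (Fin n) ℝ) σ) := by
  refine LinearIndependent.of_comp (prefixSums σ) ?_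
  convert (Pi.basisFun ℝ (Fin (n - 1))).linearIndependent
  ext i : 1
  simp [prefixSums_diffA_basisFun]

theorem finrank_spanDiff_consecutiveAlong_basisFun (σ : Equiv.Perm (Fin n))
    (s : Finset (Fin (n - 1))) :
    finrank ℝ ↥(spanDiff ℝ (ConsecutiveAlong σ s) (EuclideanSpace.basisFun (Fin n) ℝ)) =
      s.card := by
  have hs : LinearIndependent ℝ fun i : s => diffA n n (EuclideanSpace.basisFun (Fin n) ℝ) σ i :=
    (linearIndependent_diffA_basisFun σ).comp _ Subtype.val_injective
  rw [spanDiff_consecutiveAlong, finrank_span_eq_card hs, Fintype.card_coe]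

end ConsecutiveDifferences

section Sorting

variable {n : ℕ} {r : Fin n → Fin n → Prop}

theorem Equivalence.exists_perm_rel_of_le_of_le (hr : Equivalence r) :
    ∃ σ : Equiv.Perm (Fin n), ∀ i j k, i ≤ j → j ≤ k → r (σ i) (σ k) → r (σ i) (σ j) := by
  let S : Setoid (Fin n) := ⟨r, hr⟩
  let f (a : Fin n) : Fin n := (Quotient.mk S a).out
  have hf (a b : Fin n) : f a = f b ↔ r a b := Quotient.out_inj.trans Quotient.eq
  refine ⟨Tuple.sort f, fun i j k hij hjk hik => ?_⟩
  have hmono := Tuple.monotone_sort f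
  rw [← hf] at hik ⊢
  exact le_antisymm (hmono hij) (hik ▸ hmono hjk)

theorem spanDiff_eq_spanDiff_consecutiveAlong {R M : Type*} [Ring R] [AddCommGroup M] [Module R M]
    [DecidableRel r] (hr : Equivalence r) {σ : Equiv.Perm (Fin n)}
    (hσ : ∀ i j k, i ≤ j → j ≤ k → r (σ i) (σ k) → r (σ i) (σ j)) (z : Fin n → M) :
    spanDiff R r z = spanDiff R (ConsecutiveAlong σ {i | r (σ ⟨i, by have := i.isLt; omega⟩)
      (σ ⟨i + 1, by have := i.isLt; omega⟩)}) z := by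
  set P := spanDiff R (ConsecutiveAlong σ {i | r (σ ⟨i, by have := i.isLt; omega⟩)
      (σ ⟨i + 1, by have := i.isLt; omega⟩)}) z
  refine le_antisymm (span_le.2 ?_) (spanDiff_mono ?_ z)
  · have telescope (p : Fin n) (q : ℕ) (hpq : p.val ≤ q) :
        ∀ hq : q < n, r (σ p) (σ ⟨q, hq⟩) → z (σ p) - z (σ ⟨q, hq⟩) ∈ P := by
      induction q, hpq using Nat.le_induction with
      | base => simp
      | succ q hpq ih =>
        intro hq hpq'
        have h₁ : r (σ p) (σ ⟨q, by omega⟩) :=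
          hσ _ _ ⟨q + 1, hq⟩ hpq (Fin.mk_le_mk.2 q.le_succ) hpq'
        have h₂ : z (σ ⟨q, by omega⟩) - z (σ ⟨q + 1, hq⟩) ∈ P :=
          sub_mem_spanDiff ⟨⟨q, by omega⟩, by simpa using hr.trans (hr.symm h₁) hpq', rfl, rfl⟩ z
        simpa using add_mem (ih (by omega) h₁) h₂
    rintro _ ⟨a, b, hab, rfl⟩
    obtain ⟨p, rfl⟩ := σ.surjective a
    obtain ⟨q, rfl⟩ := σ.surjective b
    rcases le_total p q with hpq | hqp
    · exact telescope p q hpq q.isLt hab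
    · simpa using neg_mem (telescope q p hqp p.isLt (hr.symm hab))
  · rintro _ _ ⟨i, hi, rfl, rfl⟩
    simpa using hi

end Sorting

section LinearCombination

variable {ι M : Type*} [Fintype ι] [AddCommGroup M] [Module ℝ M]

def euclideanLinearCombination (y : ι → M) : EuclideanSpace ℝ ι →ₗ[ℝ] M :=
  Fintype.linearCombination ℝ y ∘ₗ (WithLp.linearEquiv 2 ℝ (ι → ℝ)).toLinearMap

theorem map_euclideanLinearCombination_spanDiff_basisFun (y : ι → M) (r : ι → ι → Prop) :
    (spanDiff ℝ r (EuclideanSpace.basisFun ι ℝ)).map (euclideanLinearCombination y) =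
      spanDiff ℝ r y := by
  classical
  rw [map_spanDiff]
  congr 1
  funext a
  simp [euclideanLinearCombination, EuclideanSpace.basisFun_apply]

end LinearCombination

theorem orthogonal_Lspace {d n : ℕ} (y : Fin n → EuclideanSpace ℝ (Fin d)) :
    (Lspace d n y)ᗮ = LinearMap.range (euclideanLinearCombination y).adjoint := by
  rw [← LinearMap.orthogonal_ker]
  rfl

section CondA1

variable {d n : ℕ} {y : Fin n → EuclideanSpace ℝ (Fin d)}

theorem CondA1.finrank_span_diffA (h : CondA1 d n y) (σ : Equiv.Perm (Fin n))
    (s : Finset (Fin (n - 1))) :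
    finrank ℝ ↥(span ℝ (Set.range fun i : s => diffA d n y σ i)) = min d s.card := by
  obtain ⟨t, hts, ht⟩ := Finset.exists_subset_card_eq (min_le_right d s.card)
  obtain ⟨u, htu, -, hu⟩ := Finset.exists_subsuperset_card_eq (Finset.subset_univ t)
    (ht.trans_le (min_le_left _ _)) (by have := h.1; simp; omega)
  have hind : LinearIndepOn ℝ (diffA d n y σ) (t : Set (Fin (n - 1))) :=
    LinearIndepOn.mono (h.2 σ u hu) htu
  refine le_antisymm (le_min ?_ ?_) ?_
  · simpa using (span ℝ (Set.range fun i : s => diffA d n y σ i)).finrank_le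
  · exact (finrank_range_le_card (R := ℝ) _).trans_eq (Fintype.card_coe s)
  · calc min d s.card = t.card := ht.symm
      _ = finrank ℝ ↥(span ℝ (Set.range fun i : t => diffA d n y σ i)) :=
        ((finrank_span_eq_card hind).trans (Fintype.card_coe t)).symm
      _ ≤ _ := by
        refine Submodule.finrank_mono (span_mono ?_)
        rintro _ ⟨i, rfl⟩
        exact ⟨⟨i, hts i.2⟩, rfl⟩

theorem CondA1.finrank_spanDiff (h : CondA1 d n y) (r : Fin n → Fin n → Prop) :
    finrank ℝ ↥(spanDiff ℝ r y) =
      min d (finrank ℝ ↥(spanDiff ℝ r (EuclideanSpace.basisFun (Fin n) ℝ))) := by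
  classical
  have hr := Relation.EqvGen.is_equivalence r
  obtain ⟨σ, hσ⟩ := hr.exists_perm_rel_of_le_of_le
  rw [← spanDiff_eqvGen r y, ← spanDiff_eqvGen r, spanDiff_eq_spanDiff_consecutiveAlong hr hσ,
    spanDiff_eq_spanDiff_consecutiveAlong hr hσ, finrank_spanDiff_consecutiveAlong_basisFun,
    spanDiff_consecutiveAlong]
  exact h.finrank_span_diffA σ _

theorem CondA1.range_euclideanLinearCombination (h : CondA1 d n y) :
    LinearMap.range (euclideanLinearCombination y) = ⊤ := by
  obtain ⟨s, -, hs⟩ := Finset.exists_subset_card_eq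
    (show d ≤ (Finset.univ : Finset (Fin (n - 1))).card by have := h.1; simp; omega)
  refine eq_top_of_finrank_eq (le_antisymm (finrank_le _) ?_)
  calc finrank ℝ (EuclideanSpace ℝ (Fin d))
      _ = finrank ℝ ↥(spanDiff ℝ (ConsecutiveAlong 1 s) y) := by
        rw [h.finrank_spanDiff, finrank_spanDiff_consecutiveAlong_basisFun, hs, min_self,
          finrank_euclideanSpace_fin]
      _ ≤ _ := Submodule.finrank_mono <|
        map_euclideanLinearCombination_spanDiff_basisFun y _ ▸ LinearMap.map_le_range

end CondA1

theorem condA1_iff_condA2_general (d n : ℕ) (hn : d + 1 ≤ n)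
    (y : Fin n → EuclideanSpace ℝ (Fin d)) :
    CondA1 d n y ↔
      Module.finrank ℝ ↥((Lspace d n y)ᗮ) = d ∧
        InGenPosArr n ((Lspace d n y)ᗮ) (ArrA n) := by
  rw [orthogonal_Lspace, LinearMap.finrank_range_adjoint, inGenPosArr_arrA_iff]
  constructor
  · intro hA1
    have hsurj := hA1.range_euclideanLinearCombination
    refine ⟨by rw [hsurj, finrank_top, finrank_euclideanSpace_fin], fun r => ?_⟩
    rw [inGenPos_range_adjoint_orthogonal_iff hsurj,
      map_euclideanLinearCombination_spanDiff_basisFun, finrank_euclideanSpace_fin]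
    exact hA1.finrank_spanDiff r
  · rintro ⟨hrank, hgen⟩
    have hsurj : LinearMap.range (euclideanLinearCombination y) = ⊤ :=
      eq_top_of_finrank_eq (by rw [hrank, finrank_euclideanSpace_fin])
    refine ⟨hn, fun σ s hs => ?_⟩
    have hrank_s := hgen (ConsecutiveAlong σ s)
    rw [inGenPos_range_adjoint_orthogonal_iff hsurj,
      map_euclideanLinearCombination_spanDiff_basisFun, finrank_euclideanSpace_fin,
      finrank_spanDiff_consecutiveAlong_basisFun, hs, min_self, spanDiff_consecutiveAlong]
      at hrank_s
    rw [linearIndependent_iff_card_eq_finrank_span, Fintype.card_coe, hs, Set.finrank, hrank_s]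

/-- Theorem 2.13: equivalence of the general position assumptions (A1) and (A2). -/
theorem condA1_iff_condA2 (d n : ℕ) (hd : 2 ≤ d) (hn : d + 1 ≤ n)
    (y : Fin n → EuclideanSpace ℝ (Fin d)) :
    CondA1 d n y ↔
      Module.finrank ℝ ↥((Lspace d n y)ᗮ) = d ∧
        InGenPosArr n ((Lspace d n y)ᗮ) (ArrA n) :=
  condA1_iff_condA2_general d n hn y
end

section
/- Let d ≥ 2, 1 ≤ k ≤ d, and let y_1,…,y_n ∈ ℝ^d satisfy condition (A1). Set L := {β ∈ ℝ^n : β_1 y_1 + ⋯ + β_n y_n = 0}. Then for all 1 ≤ l_1 < ⋯ < l_{n−d+k−1} ≤ n−1 and σ ∈ S_n, one has F^A_σ(l_1,…,l_{n−d+k−1}) = {0} if and only if C^A_σ(l_1,…,l_{n−d+k−1}) ∩ L^⊥ = {0}. -/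
open scoped RealInnerProductSpace BigOperators Pointwise

/-! The map `v ↦ (⟨v, y_i⟩)_i` from `ℝ^d` to `ℝ^n` pulls `C^A_σ(l)` back to `F^A_σ(l)`, and its
range is `L^⊥` because `β ↦ ∑ β_i y_i` is its adjoint. Under (A1) it is injective, since any `d`
of the differences `y_i - y_{i+1}` already span `ℝ^d`; an injective map pulls a set back to `{0}`
exactly when the set meets its range in `{0}`. -/

section InnerProducts

variable {ι E : Type*} [NormedAddCommGroup E] [InnerProductSpace ℝ E]

def innerProducts (y : ι → E) : E →ₗ[ℝ] EuclideanSpace ℝ ι where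
  toFun v := WithLp.toLp 2 fun i => ⟪v, y i⟫
  map_add' a b := by ext i; simp [inner_add_left]
  map_smul' c a := by ext i; simp [inner_smul_left]

theorem innerProducts_apply (y : ι → E) (v : E) (i : ι) : innerProducts y v i = ⟪v, y i⟫ :=
  rfl

theorem inner_innerProducts [Fintype ι] (y : ι → E) (v : E) (β : EuclideanSpace ℝ ι) :
    ⟪innerProducts y v, β⟫ = ⟪v, ∑ i, β i • y i⟫ := by
  simp only [PiLp.inner_apply, inner_sum, inner_smul_right, innerProducts_apply,
    RCLike.inner_apply, conj_trivial, mul_comm]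

end InnerProducts

theorem lspace_eq_orthogonal_range {d n : ℕ} (y : Fin n → EuclideanSpace ℝ (Fin d)) :
    Lspace d n y = (LinearMap.range (innerProducts y))ᗮ := by
  ext β
  simp only [Submodule.mem_orthogonal, LinearMap.mem_range, forall_exists_index,
    forall_apply_eq_imp_iff, inner_innerProducts]
  refine ⟨fun hβ v => by rw [show ∑ i, β i • y i = 0 from hβ, inner_zero_right], fun h => ?_⟩
  exact inner_self_eq_zero.mp (h _)

theorem orthogonal_lspace {d n : ℕ} (y : Fin n → EuclideanSpace ℝ (Fin d)) :
    (Lspace d n y)ᗮ = LinearMap.range (innerProducts y) := by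
  rw [lspace_eq_orthogonal_range, Submodule.orthogonal_orthogonal]

theorem CondA1.span_diffA_eq_top {d n : ℕ} {y : Fin n → EuclideanSpace ℝ (Fin d)}
    (hy : CondA1 d n y) (σ : Equiv.Perm (Fin n)) :
    Submodule.span ℝ (Set.range (diffA d n y σ)) = ⊤ := by
  obtain ⟨s, -, hs⟩ := (Finset.univ : Finset (Fin (n - 1))).exists_subset_card_eq (n := d)
    (by simp only [Finset.card_univ, Fintype.card_fin]; have := hy.1; omega)
  refine eq_top_iff.mpr (le_trans ?_ (Submodule.span_mono (Set.range_comp_subset_range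
    ((↑) : s → Fin (n - 1)) (diffA d n y σ))))
  exact ((hy.2 σ s hs).span_eq_top_of_card_eq_finrank' (by simp [hs])).ge

theorem CondA1.innerProducts_injective {d n : ℕ} {y : Fin n → EuclideanSpace ℝ (Fin d)}
    (hy : CondA1 d n y) : Function.Injective (innerProducts y) := by
  refine (injective_iff_map_eq_zero _).mpr fun v hv => ?_
  have hvy : ∀ i, ⟪v, y i⟫ = 0 := fun i => by
    simpa only [innerProducts_apply, PiLp.zero_apply] using congr($hv i)
  have : innerₛₗ ℝ v = 0 := LinearMap.ext_on_range (hy.span_diffA_eq_top 1) fun i => by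
    simp [diffA, inner_sub_right, hvy]
  exact inner_self_eq_zero.mp congr($this v)

theorem faceA_eq_preimage (d n : ℕ) (y : Fin n → EuclideanSpace ℝ (Fin d))
    (σ : Equiv.Perm (Fin n)) (m : ℕ) (l : Fin m → ℕ) :
    FaceA d n y σ m l = innerProducts y ⁻¹' ChamberFaceA n σ m l :=
  rfl

theorem Function.Injective.preimage_eq_singleton_iff {α β : Type*} {f : α → β}
    (hf : Function.Injective f) {s : Set β} {a : α} :
    f ⁻¹' s = {a} ↔ s ∩ Set.range f = {f a} := by
  rw [← Set.image_preimage_eq_inter_range, ← Set.image_singleton,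
    (Set.image_injective.mpr hf).eq_iff]

theorem face_zero_iff_chamber_face_A_general (d n k : ℕ)
    (y : Fin n → EuclideanSpace ℝ (Fin d)) (hy : CondA1 d n y)
    (σ : Equiv.Perm (Fin n)) (l : Fin (n - d + k - 1) → ℕ) :
    FaceA d n y σ (n - d + k - 1) l = {0} ↔
      ChamberFaceA n σ (n - d + k - 1) l ∩
        ((Lspace d n y)ᗮ : Set (EuclideanSpace ℝ (Fin n))) = {0} := by
  rw [faceA_eq_preimage, hy.innerProducts_injective.preimage_eq_singleton_iff, map_zero,
    orthogonal_lspace, LinearMap.coe_range]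

/-- Lemma 2.14: a face `F^A_σ(l_1,…,l_{n-d+k-1})` of the Weyl tessellation of type `A_{n-1}`
is `{0}` if and only if the corresponding face `C^A_σ(l_1,…,l_{n-d+k-1})` of the Weyl
chambers of type `A_{n-1}` intersects `L^⊥` trivially. -/
theorem face_zero_iff_chamber_face_A (d n k : ℕ) (hd : 2 ≤ d) (hk : 1 ≤ k) (hkd : k ≤ d)
    (y : Fin n → EuclideanSpace ℝ (Fin d)) (hy : CondA1 d n y)
    (σ : Equiv.Perm (Fin n)) (l : Fin (n - d + k - 1) → ℕ)
    (hl : ValidA n (n - d + k - 1) l) :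
    FaceA d n y σ (n - d + k - 1) l = {0} ↔
      ChamberFaceA n σ (n - d + k - 1) l ∩
        ((Lspace d n y)ᗮ : Set (EuclideanSpace ℝ (Fin n))) = {0} :=
  face_zero_iff_chamber_face_A_general d n k y hy σ l
end

section
/- Let C be a polyhedral cone in ℝ^d and let L be a linear subspace of ℝ^d. Then C ∩ L is not contained in the lineality space linsp(C) if and only if the relative interior of the dual cone C° has empty intersection with the orthogonal complement L^⊥. -/
open scoped RealInnerProductSpace BigOperators Pointwise

/-!
`C°` is the cone generated by the `xᵢ` (Farkas' lemma), and every strictly positive combination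
of the `xᵢ` lies in its relative interior. If `u ∈ relint C° ∩ Lᗮ` and `v ∈ C ∩ L`, then
`⟪u, v⟫ = 0`, and moving `u` slightly away from `xᵢ` inside `C°` shows `⟪xᵢ, v⟫ ≥ 0`, so
`v ∈ linsp C`. Conversely, if `C ∩ L ⊆ linsp C`, the projections `P_L xᵢ` satisfy the hypothesis
of Stiemke's alternative, which gives `λ > 0` with `∑ λᵢ P_L xᵢ = 0`, i.e.
`∑ λᵢ xᵢ ∈ relint C° ∩ Lᗮ`.
-/

open Filter Topology Set

theorem PointedCone.mem_hull_range_iff {R E ι : Type*} [Semiring R] [PartialOrder R]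
    [IsOrderedRing R] [AddCommMonoid E] [Module R E] [Fintype ι] {x : ι → E} {p : E} :
    p ∈ PointedCone.hull R (range x) ↔ ∃ c : ι → R, (∀ i, 0 ≤ c i) ∧ ∑ i, c i • x i = p := by
  rw [Submodule.mem_span_range_iff_exists_fun]
  constructor
  · rintro ⟨c, rfl⟩
    exact ⟨fun i => c i, fun i => (c i).2, rfl⟩
  · rintro ⟨c, hc, rfl⟩
    exact ⟨fun i => ⟨c i, hc i⟩, rfl⟩

theorem coe_affineSpan_hull {E ι : Type*} [AddCommGroup E] [Module ℝ E] (x : ι → E) :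
    (affineSpan ℝ (PointedCone.hull ℝ (range x) : Set E) : Set E) =
      Submodule.span ℝ (range x) := by
  rw [← insert_eq_of_mem (PointedCone.hull ℝ (range x)).zero_mem, affineSpan_insert_zero,
    Submodule.span_span_of_tower]

section
variable {𝕜 V P : Type*} [Ring 𝕜] [AddCommGroup V] [Module 𝕜 V] [TopologicalSpace P]
  [AddTorsor V P]

theorem mem_intrinsicInterior_iff_eventually {s : Set P} {u : P} :
    u ∈ intrinsicInterior 𝕜 s ↔ u ∈ affineSpan 𝕜 s ∧ ∀ᶠ q in 𝓝[affineSpan 𝕜 s] u, q ∈ s := by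
  constructor
  · rintro ⟨y, hy, rfl⟩
    exact ⟨y.2, preimage_coe_mem_nhds_subtype.1 (mem_interior_iff_mem_nhds.1 hy)⟩
  · rintro ⟨hu, hs⟩
    exact ⟨⟨u, hu⟩, mem_interior_iff_mem_nhds.2 (preimage_coe_mem_nhds_subtype.2 hs), rfl⟩

end

section
variable {E : Type*} [AddCommGroup E] [Module ℝ E] [TopologicalSpace E] [IsTopologicalAddGroup E]
  [ContinuousSMul ℝ E]

theorem exists_pos_add_smul_sub_mem_of_mem_intrinsicInterior {s : Set E} {u w : E}
    (hu : u ∈ intrinsicInterior ℝ s) (hw : w ∈ s) : ∃ t : ℝ, 0 < t ∧ u + t • (u - w) ∈ s := by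
  obtain ⟨huA, hs⟩ := mem_intrinsicInterior_iff_eventually.1 hu
  have hwA : w ∈ affineSpan ℝ s := subset_affineSpan ℝ s hw
  have hcont : Continuous fun t : ℝ => u + t • (u - w) := by fun_prop
  have hlim : Tendsto (fun t : ℝ => u + t • (u - w)) (𝓝[>] 0) (𝓝[affineSpan ℝ s] u) := by
    refine tendsto_nhdsWithin_iff.2 ⟨?_, Eventually.of_forall fun t => ?_⟩
    · exact (hcont.tendsto' 0 u (by simp)).mono_left nhdsWithin_le_nhds
    · simpa [add_comm] using AffineSubspace.smul_vsub_vadd_mem _ t huA hwA huA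
  exact ((hlim.eventually hs).and self_mem_nhdsWithin).exists.imp fun t h => ⟨h.2, h.1⟩

theorem sum_smul_mem_intrinsicInterior_hull [T2Space E] {ι : Type*} [Fintype ι] (x : ι → E)
    {c : ι → ℝ} (hc : ∀ i, 0 < c i) :
    ∑ i, c i • x i ∈ intrinsicInterior ℝ (PointedCone.hull ℝ (range x) : Set E) := by
  let T := (Fintype.linearCombination ℝ x).rangeRestrict
  have hopen : IsOpen (T '' univ.pi fun _ => Ioi 0) :=
    T.isOpenMap_of_finiteDimensional (LinearMap.surjective_rangeRestrict _) _
      (isOpen_set_pi finite_univ fun _ _ => isOpen_Ioi)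
  refine mem_intrinsicInterior_iff_eventually.2 ⟨subset_affineSpan ℝ _ ?_, ?_⟩
  · exact PointedCone.mem_hull_range_iff.2 ⟨c, fun i => (hc i).le, rfl⟩
  rw [coe_affineSpan_hull, ← Fintype.range_linearCombination]
  refine mem_of_superset (mem_nhds_subtype_iff_nhdsWithin.1 <|
    hopen.mem_nhds (mem_image_of_mem T (mem_univ_pi.2 hc))) ?_
  rintro _ ⟨_, ⟨d, hd, rfl⟩, rfl⟩
  exact PointedCone.mem_hull_range_iff.2 ⟨d, fun i => (hd i trivial).le, rfl⟩

end

section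
variable {E : Type*} [NormedAddCommGroup E] [InnerProductSpace ℝ E]

/-- The projection onto `vᗮ` along `a` (the identity when `⟪a, v⟫ = 0`). -/
@[simps]
noncomputable def obliqueProjection (a v : E) : E →ₗ[ℝ] E where
  toFun y := y - (⟪y, v⟫ / ⟪a, v⟫) • a
  map_add' y z := by simp only [inner_add_left, add_div, add_smul]; abel
  map_smul' r y := by simp only [real_inner_smul_left, mul_div_assoc, smul_sub, mul_smul]; rfl

theorem inner_obliqueProjection_left (a v y w : E) :
    ⟪obliqueProjection a v y, w⟫ = ⟪y, obliqueProjection v a w⟫ := by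
  simp only [obliqueProjection_apply, inner_sub_left, inner_sub_right, real_inner_smul_left,
    real_inner_smul_right]
  rw [real_inner_comm a w, real_inner_comm a v]
  ring

theorem obliqueProjection_self {a v : E} (h : ⟪a, v⟫ ≠ 0) : obliqueProjection a v a = 0 := by
  simp [h]

theorem inner_nonpos_of_mem_hull_range {ι : Type*} [Fintype ι] {z : ι → E} {q v : E}
    (hq : q ∈ PointedCone.hull ℝ (range z)) (hv : ∀ i, ⟪z i, v⟫ ≤ 0) : ⟪q, v⟫ ≤ 0 := by
  obtain ⟨c, hc, rfl⟩ := PointedCone.mem_hull_range_iff.1 hq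
  rw [sum_inner]
  exact Finset.sum_nonpos fun i _ => by
    rw [real_inner_smul_left]; exact mul_nonpos_of_nonneg_of_nonpos (hc i) (hv i)

/-- The inductive step of Farkas' lemma: when `v` separates `p` from the `z i` but not from `a`,
`a` is eliminated by projecting onto `vᗮ` along `a`. -/
theorem mem_hull_insert_or_exists_inner_pos {ι : Type*} [Fintype ι] {z : ι → E} {a p v : E}
    (hv : ∀ i, ⟪z i, v⟫ ≤ 0) (hpv : 0 < ⟪p, v⟫) (hav : 0 < ⟪a, v⟫)
    (h : obliqueProjection a v p ∈ PointedCone.hull ℝ (range (obliqueProjection a v ∘ z)) ∨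
      ∃ w, (∀ i, ⟪obliqueProjection a v (z i), w⟫ ≤ 0) ∧ 0 < ⟪obliqueProjection a v p, w⟫) :
    p ∈ PointedCone.hull ℝ (insert a (range z)) ∨
      ∃ w, (∀ i, ⟪z i, w⟫ ≤ 0) ∧ ⟪a, w⟫ ≤ 0 ∧ 0 < ⟪p, w⟫ := by
  rcases h with hp | ⟨w, hw, hpw⟩
  · left
    obtain ⟨μ, hμ, hμp⟩ := PointedCone.mem_hull_range_iff.1 hp
    have hq : ∑ i, μ i • z i ∈ PointedCone.hull ℝ (range z) :=
      PointedCone.mem_hull_range_iff.2 ⟨μ, hμ, rfl⟩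
    have hker : obliqueProjection a v (p - ∑ i, μ i • z i) = 0 := by
      simp only [map_sub, map_sum, map_smul, ← hμp, Function.comp_apply, sub_self]
    have ht : 0 ≤ ⟪p - ∑ i, μ i • z i, v⟫ / ⟪a, v⟫ := by
      have := inner_nonpos_of_mem_hull_range hq hv
      exact div_nonneg (by rw [inner_sub_left]; linarith) hav.le
    rw [obliqueProjection_apply, sub_eq_zero, sub_eq_iff_eq_add] at hker
    rw [hker]
    exact add_mem (Submodule.smul_mem _ (⟨_, ht⟩ : {c : ℝ // 0 ≤ c})
      (PointedCone.subset_hull (mem_insert _ _))) (Submodule.span_mono (subset_insert _ _) hq)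
  · right
    refine ⟨obliqueProjection v a w, fun i => ?_, ?_, ?_⟩
    · rw [← inner_obliqueProjection_left]; exact hw i
    · rw [← inner_obliqueProjection_left, obliqueProjection_self hav.ne', inner_zero_left]
    · rwa [← inner_obliqueProjection_left]

theorem mem_hull_or_exists_inner_pos {m : ℕ} (z : Fin m → E) (p : E) :
    p ∈ PointedCone.hull ℝ (range z) ∨ ∃ v, (∀ i, ⟪z i, v⟫ ≤ 0) ∧ 0 < ⟪p, v⟫ := by
  induction m generalizing p with
  | zero =>
    by_cases hp : p = 0
    · exact .inl (hp ▸ zero_mem _)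
    · exact .inr ⟨p, finZeroElim, real_inner_self_pos.2 hp⟩
  | succ m ih =>
    rcases ih (z ∘ Fin.castSucc) p with hp | ⟨v, hv, hpv⟩
    · exact .inl (Submodule.span_mono (range_comp_subset_range _ _) hp)
    by_cases hav : ⟪z (Fin.last m), v⟫ ≤ 0
    · exact .inr ⟨v, Fin.forall_fin_succ'.2 ⟨hv, hav⟩, hpv⟩
    rcases mem_hull_insert_or_exists_inner_pos hv hpv (not_le.1 hav) (ih _ _) with
      hp | ⟨w, hw, haw, hpw⟩
    · refine .inl (Submodule.span_mono ?_ hp)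
      exact insert_subset_iff.2 ⟨mem_range_self _, range_comp_subset_range _ _⟩
    · exact .inr ⟨w, Fin.forall_fin_succ'.2 ⟨hw, haw⟩, hpw⟩

theorem exists_pos_sum_smul_eq_zero {m : ℕ} (z : Fin m → E)
    (h : ∀ v, (∀ i, ⟪z i, v⟫ ≤ 0) → ∀ i, ⟪z i, v⟫ = 0) :
    ∃ c : Fin m → ℝ, (∀ i, 0 < c i) ∧ ∑ i, c i • z i = 0 := by
  rcases mem_hull_or_exists_inner_pos z (-∑ i, z i) with hp | ⟨v, hv, hpv⟩
  · obtain ⟨c, hc, hcz⟩ := PointedCone.mem_hull_range_iff.1 hp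
    refine ⟨fun i => c i + 1, fun i => by linarith [hc i], ?_⟩
    simp only [add_smul, one_smul, Finset.sum_add_distrib, hcz, neg_add_cancel]
  · simp [sum_inner, h v hv] at hpv

theorem inner_eq_zero_of_mem_intrinsicInterior_hull {ι : Type*} [Fintype ι] {x : ι → E} {u v : E}
    (hu : u ∈ intrinsicInterior ℝ (PointedCone.hull ℝ (range x) : Set E)) (huv : ⟪u, v⟫ = 0)
    (hv : ∀ i, ⟪x i, v⟫ ≤ 0) (i : ι) : ⟪x i, v⟫ = 0 := by
  obtain ⟨t, ht, hmem⟩ := exists_pos_add_smul_sub_mem_of_mem_intrinsicInterior hu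
    (PointedCone.subset_hull (mem_range_self i))
  have := inner_nonpos_of_mem_hull_range hmem hv
  rw [inner_add_left, real_inner_smul_left, inner_sub_left, huv] at this
  nlinarith [hv i]

theorem exists_mem_intrinsicInterior_hull_inter_orthogonal {m : ℕ} {x : Fin m → E}
    (L : Submodule ℝ E) [L.HasOrthogonalProjection]
    (h : ∀ v, (∀ i, ⟪x i, v⟫ ≤ 0) → v ∈ L → ∀ i, ⟪x i, v⟫ = 0) :
    (intrinsicInterior ℝ (PointedCone.hull ℝ (range x) : Set E) ∩ Lᗮ).Nonempty := by
  obtain ⟨c, hc, hcx⟩ := exists_pos_sum_smul_eq_zero (fun i => L.starProjection (x i))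
    fun v hv i => by
      simp only [Submodule.inner_starProjection_left_eq_right] at hv ⊢
      exact h _ hv (L.starProjection_apply_mem v) i
  refine ⟨_, sum_smul_mem_intrinsicInterior_hull x hc, ?_⟩
  rw [SetLike.mem_coe, ← L.orthogonalProjectionOnto_eq_zero_iff, ← Submodule.coe_eq_zero,
    Submodule.coe_orthogonalProjectionOnto_apply]
  simpa [map_sum, map_smul] using hcx

end

theorem dualCone_polyCone (d m : ℕ) (x : Fin m → EuclideanSpace ℝ (Fin d)) :
    DualCone d (PolyCone d m x) = PointedCone.hull ℝ (range x) := by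
  ext u
  refine ⟨fun hu => ?_, fun hu w hw => real_inner_comm w u ▸ inner_nonpos_of_mem_hull_range hu hw⟩
  refine (mem_hull_or_exists_inner_pos x u).resolve_right ?_
  rintro ⟨v, hv, huv⟩
  exact (hu v hv).not_gt (real_inner_comm u v ▸ huv)

theorem mem_polyCone_inter_neg_iff {d m : ℕ} {x : Fin m → EuclideanSpace ℝ (Fin d)}
    {v : EuclideanSpace ℝ (Fin d)} :
    v ∈ PolyCone d m x ∩ -PolyCone d m x ↔ ∀ i, ⟪x i, v⟫ = 0 := by
  change (∀ i, ⟪x i, v⟫ ≤ 0) ∧ (∀ i, ⟪x i, -v⟫ ≤ 0) ↔ _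
  simp only [inner_neg_right, neg_nonpos, ← forall_and, le_antisymm_iff]

/-- Lemma 2.11: for a polyhedral cone `C` and a linear subspace `L`, `C ∩ L ⊄ linsp(C)` if
and only if `relint(C°) ∩ L^⊥ = ∅`. -/
theorem cone_meet_subspace_iff_relint_dual (d m : ℕ)
    (x : Fin m → EuclideanSpace ℝ (Fin d))
    (L : Submodule ℝ (EuclideanSpace ℝ (Fin d))) :
    ¬(PolyCone d m x ∩ (L : Set (EuclideanSpace ℝ (Fin d))) ⊆
        PolyCone d m x ∩ (-PolyCone d m x)) ↔
      intrinsicInterior ℝ (DualCone d (PolyCone d m x)) ∩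
        (Lᗮ : Set (EuclideanSpace ℝ (Fin d))) = ∅ := by
  rw [dualCone_polyCone, ← not_nonempty_iff_eq_empty, not_iff_not]
  constructor
  · intro h
    exact exists_mem_intrinsicInterior_hull_inter_orthogonal L fun v hv hvL =>
      mem_polyCone_inter_neg_iff.1 (h ⟨hv, hvL⟩)
  · rintro ⟨u, hu, huL⟩ v ⟨hv, hvL⟩
    exact mem_polyCone_inter_neg_iff.2 <|
      inner_eq_zero_of_mem_intrinsicInterior_hull hu (L.inner_left_of_mem_orthogonal hvL huL) hv
end

section
/- Let y_1,…,y_n ∈ ℝ^d with d ≥ 2 be in general position (i.e., any d of them are linearly independent). Then the positive hull pos{y_1,…,y_n} = {Σ λ_i y_i : λ_1,…,λ_n ≥ 0} equals ℝ^d if and only if there exists α = (α_1,…,α_n) ∈ ℝ^n with all α_i ≥ 0, α ≠ 0, and α_1 y_1 + ⋯ + α_n y_n = 0. -/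
open scoped RealInnerProductSpace BigOperators Pointwise

/-! If `∑ aᵢ yᵢ = 0` with `a ≥ 0`, `a ≠ 0`, general position forces more than `d` of the `aᵢ` to
be positive, so `d` vectors with positive coefficient span `ℝ^d`. Any `v = ∑ cᵢ yᵢ` supported on
them becomes a nonnegative combination after adding `t • ∑ aᵢ yᵢ = 0` for `t` large. Conversely,
writing `-∑ yᵢ = ∑ λᵢ yᵢ` with `λ ≥ 0` gives the relation `∑ (λᵢ + 1) yᵢ = 0`. -/

section PosHull

variable {ι M : Type*} [Fintype ι] [AddCommGroup M] {y : ι → M}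

theorem lt_card_filter_ne_zero_of_sum_smul_eq_zero {R : Type*} [Ring R] [DecidableEq R]
    [Module R M] {k : ℕ}
    (hgp : ∀ s : Finset ι, s.card ≤ k → LinearIndependent R (fun i : s => y i.1))
    {a : ι → R} (ha : a ≠ 0) (hsum : ∑ i, a i • y i = 0) :
    k < (Finset.univ.filter (a · ≠ 0)).card := by
  by_contra! hcard
  set S := Finset.univ.filter (a · ≠ 0)
  have hS : ∑ i : S, a i • y i = 0 := by
    rw [Finset.sum_coe_sort S (fun i => a i • y i), ← hsum]
    exact Finset.sum_filter_of_ne fun i _ hi => left_ne_zero_of_smul hi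
  obtain ⟨i, hi⟩ := Function.ne_iff.1 ha
  exact hi (Fintype.linearIndependent_iff.1 (hgp S hcard) (fun i => a i) hS
    ⟨i, Finset.mem_filter.2 ⟨Finset.mem_univ i, hi⟩⟩)

theorem exists_sum_smul_eq_of_linearIndependent_of_card_eq_finrank {K : Type*} [DivisionRing K]
    [Module K M] [FiniteDimensional K M] {s : Finset ι}
    (hli : LinearIndependent K (fun i : s => y i.1)) (hcard : s.card = Module.finrank K M)
    (v : M) : ∃ c : ι → K, (∀ i ∉ s, c i = 0) ∧ v = ∑ i, c i • y i := by
  have hspan := hli.span_eq_top_of_card_eq_finrank' (by simpa using hcard)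
  obtain ⟨l, hls, rfl⟩ := (Finsupp.mem_span_image_iff_linearCombination K).1
    (by simp [Set.image_eq_range, hspan] : v ∈ Submodule.span K (y '' s))
  exact ⟨l, (Finsupp.mem_supported' K l).1 hls,
    by rw [Finsupp.linearCombination_apply, Finsupp.sum_fintype _ _ fun i => zero_smul K (y i)]⟩

variable {𝕜 : Type*} [Field 𝕜] [LinearOrder 𝕜] [IsStrictOrderedRing 𝕜] [Module 𝕜 M]

variable (𝕜) in
def posHull (y : ι → M) : Set M :=
  {v | ∃ lam : ι → 𝕜, (∀ i, 0 ≤ lam i) ∧ v = ∑ i, lam i • y i}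

theorem sum_smul_mem_posHull_of_sum_smul_eq_zero {a : ι → 𝕜} (ha : ∀ i, 0 ≤ a i)
    (hsum : ∑ i, a i • y i = 0) {c : ι → 𝕜} (hc : ∀ i, a i = 0 → c i = 0) :
    ∑ i, c i • y i ∈ posHull 𝕜 y := by
  set t := ∑ i, |c i| / a i
  refine ⟨fun i => c i + t * a i, fun i => ?_, ?_⟩
  · rcases (ha i).eq_or_lt with hai | hai
    · simp [← hai, hc i hai.symm]
    · have hle : |c i| / a i ≤ t :=
        Finset.single_le_sum (fun j _ => div_nonneg (abs_nonneg _) (ha j)) (Finset.mem_univ i)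
      have hct : |c i| ≤ t * a i := (div_le_iff₀ hai).1 hle
      linarith [neg_abs_le (c i)]
  · simp only [add_smul, Finset.sum_add_distrib, mul_smul, ← Finset.smul_sum, hsum, smul_zero,
      add_zero]

theorem posHull_eq_univ_of_sum_smul_eq_zero [FiniteDimensional 𝕜 M]
    (hgp : ∀ s : Finset ι, s.card ≤ Module.finrank 𝕜 M →
      LinearIndependent 𝕜 (fun i : s => y i.1))
    {a : ι → 𝕜} (ha0 : ∀ i, 0 ≤ a i) (ha : a ≠ 0) (hsum : ∑ i, a i • y i = 0) :
    posHull 𝕜 y = Set.univ := by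
  obtain ⟨T, hTS, hT⟩ :=
    Finset.exists_subset_card_eq (lt_card_filter_ne_zero_of_sum_smul_eq_zero hgp ha hsum).le
  refine Set.eq_univ_of_forall fun v => ?_
  obtain ⟨c, hcT, rfl⟩ :=
    exists_sum_smul_eq_of_linearIndependent_of_card_eq_finrank (hgp T hT.le) hT v
  refine sum_smul_mem_posHull_of_sum_smul_eq_zero ha0 hsum fun i hai => hcT i fun hi => ?_
  simpa [hai] using hTS hi

theorem exists_nonneg_ne_zero_sum_smul_eq_zero_of_posHull_eq_univ [Nontrivial M]
    (h : posHull 𝕜 y = Set.univ) :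
    ∃ a : ι → 𝕜, (∀ i, 0 ≤ a i) ∧ a ≠ 0 ∧ ∑ i, a i • y i = 0 := by
  have : Nonempty ι := by
    by_contra hι
    rw [not_nonempty_iff] at hι
    obtain ⟨v, hv⟩ := exists_ne (0 : M)
    obtain ⟨lam, -, rfl⟩ : v ∈ posHull 𝕜 y := h ▸ Set.mem_univ v
    simp at hv
  obtain ⟨lam, hlam, hsum⟩ : -∑ i, y i ∈ posHull 𝕜 y := h ▸ Set.mem_univ _
  refine ⟨fun i => lam i + 1, fun i => by linarith [hlam i], fun h0 => ?_, ?_⟩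
  · have hi := congrFun h0 (Classical.arbitrary ι)
    rw [Pi.zero_apply] at hi
    linarith [hlam (Classical.arbitrary ι)]
  · simp [add_smul, Finset.sum_add_distrib, ← hsum]

end PosHull

/-- Lemma 2.10: for vectors in general position, the positive hull is all of `ℝ^d` if and
only if `0` is a nonzero nonnegative combination of the vectors. -/
theorem pos_hull_eq_univ_iff (d n : ℕ) (hd : 2 ≤ d)
    (y : Fin n → EuclideanSpace ℝ (Fin d))
    (hgp : ∀ s : Finset (Fin n), s.card ≤ d →
      LinearIndependent ℝ (fun i : s => y i.1)) :
    {v | ∃ lam : Fin n → ℝ, (∀ i, 0 ≤ lam i) ∧ v = ∑ i, lam i • y i} = Set.univ ↔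
      ∃ a : Fin n → ℝ, (∀ i, 0 ≤ a i) ∧ a ≠ 0 ∧ ∑ i, a i • y i = 0 := by
  have : Nontrivial (EuclideanSpace ℝ (Fin d)) :=
    Module.nontrivial_of_finrank_pos (R := ℝ) (by rw [finrank_euclideanSpace_fin]; omega)
  refine ⟨exists_nonneg_ne_zero_sum_smul_eq_zero_of_posHull_eq_univ, ?_⟩
  rintro ⟨a, ha0, ha, hsum⟩
  exact posHull_eq_univ_of_sum_smul_eq_zero (by rwa [finrank_euclideanSpace_fin]) ha0 ha hsum
end
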